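/- arXiv:1108.0371 — 7 statements merged into one kernel-verified Lean document; each statement's English description precedes it below -/
import Mathlib

section
/- Let $R$ be a commutative Noetherian $\mathbb{Z}$-graded ring whose degree-zero component is a field $F$ and which is infinite-dimensional as an $F$-vector space. Then at least one minimal prime ideal of $R$ has a nonzero homogeneous component of nonzero degree strictly contained in the corresponding component of $R$ (equivalently, not every minimal prime agrees with $R$ in all nonzero degrees). -/
/-!
If every minimal prime contained all homogeneous elements of nonzero degree, these elements
would be nilpotent, so every element of `R` would be its degree-zero part, a scalar, plus a
nilpotent. Then `R ⧸ nilradical R = F`, so the nilradical is maximal, `R` is a zero-dimensional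
Noetherian local ring, hence Artinian, and an Artinian ring with residue field `F` is
finite-dimensional over `F`.
-/

theorem GradedRing.sub_proj_zero_mem {ι A σ : Type*} [DecidableEq ι] [AddMonoid ι] [Ring A]
    [SetLike σ A] [AddSubmonoidClass σ A] (𝒜 : ι → σ) [GradedRing 𝒜] {I : Ideal A}
    (hI : ∀ i ≠ 0, ∀ x ∈ 𝒜 i, x ∈ I) (r : A) : r - GradedRing.proj 𝒜 0 r ∈ I := by
  induction r using DirectSum.Decomposition.inductionOn 𝒜 with
  | zero => simp
  | @homogeneous i x =>
    obtain ⟨x, hx⟩ := x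
    rw [GradedRing.proj_apply]
    by_cases hi : i = 0
    · subst hi
      simp [DirectSum.decompose_of_mem_same 𝒜 hx]
    · simpa [DirectSum.decompose_of_mem_ne 𝒜 hx hi] using hI _ hi x hx
  | add a b ha hb =>
    rw [map_add, add_sub_add_comm]
    exact add_mem ha hb

section

variable {F R : Type*} [Field F] [CommRing R] [Algebra F R]

theorem isMaximal_nilradical_of_surjective_algebraMap [Nontrivial R]
    (h : Function.Surjective (algebraMap F (R ⧸ nilradical R))) : (nilradical R).IsMaximal := by
  have : Nontrivial (R ⧸ nilradical R) :=
    Ideal.Quotient.nontrivial_iff.mpr fun htop =>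
      not_isNilpotent_one (mem_nilradical.mp (htop ▸ Submodule.mem_top))
  refine Ideal.Quotient.maximal_of_isField _ ?_
  exact MulEquiv.isField (Field.toIsField F)
    (RingEquiv.ofBijective _ ⟨(algebraMap F _).injective, h⟩).symm.toMulEquiv

theorem Module.finite_of_surjective_algebraMap_quotient_nilradical [IsNoetherianRing R]
    (h : Function.Surjective (algebraMap F (R ⧸ nilradical R))) : Module.Finite F R := by
  cases subsingleton_or_nontrivial R
  · infer_instance
  have := isMaximal_nilradical_of_surjective_algebraMap h
  have : Ring.KrullDimLE 0 R :=
    (((Ring.krullDimLE_zero_and_isLocalRing_tfae R).out 3 0 rfl rfl).mp this).1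
  have := IsNoetherianRing.isArtinianRing_of_krullDimLE_zero (R := R)
  have : Module.Finite F (R ⧸ Ring.jacobson R) := by
    rw [Ring.jacobson_eq_nilradical_of_krullDimLE_zero]
    exact Module.Finite.of_surjective (Algebra.linearMap F _) h
  exact IsSemiprimaryRing.finite_of_isNoetherian F R R

end

theorem minimal_prime_differs_in_nonzero_degree
    (F : Type*) [Field F] (R : Type*) [CommRing R] [Algebra F R] [IsNoetherianRing R]
    (𝒜 : ℤ → Submodule F R) [GradedAlgebra 𝒜]
    -- the degree-zero component is exactly `F`
    (h0 : 𝒜 0 = Submodule.span F {(1 : R)})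
    -- `R` is infinite-dimensional over `F`
    (hinf : ¬ Module.Finite F R) :
    ∃ P ∈ minimalPrimes R, ∃ n : ℤ, n ≠ 0 ∧ ∃ x ∈ 𝒜 n, x ∉ P := by
  by_contra! h
  have hnil : ∀ n ≠ 0, ∀ x ∈ 𝒜 n, x ∈ nilradical R := fun n hn x hx => by
    rw [nilradical, ← Ideal.sInf_minimalPrimes]
    exact Submodule.mem_sInf.mpr fun P hP => h P hP n hn x hx
  refine hinf (Module.finite_of_surjective_algebraMap_quotient_nilradical fun r => ?_)
  obtain ⟨r, rfl⟩ := Ideal.Quotient.mk_surjective r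
  have hr0 : GradedRing.proj 𝒜 0 r ∈ 𝒜 0 := SetLike.coe_mem _
  obtain ⟨c, hc⟩ := Submodule.mem_span_singleton.mp (h0 ▸ hr0)
  refine ⟨c, Ideal.Quotient.eq.mpr ?_⟩
  simpa [Algebra.algebraMap_eq_smul_one, hc] using
    neg_mem (GradedRing.sub_proj_zero_mem 𝒜 hnil r)
end

section
/- Let $B = \bigoplus_{n \in \mathbb{Z}} B_n$ be a commutative $\mathbb{Z}$-graded ring which is a gr-field (every nonzero homogeneous element is a unit) and suppose $B_n \neq 0$ for some $n \neq 0$. Then there exists an integer $\ell > 0$ and a homogeneous unit $Y \in B_\ell$ such that $B = B_0[Y, Y^{-1}]$, i.e., $B$ is a Laurent polynomial-type extension of the field $B_0$. -/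
/-!
The degrees of the nonzero homogeneous elements of a gr-field form a subgroup of `ℤ`, because
the inverse of a homogeneous unit of degree `n` is homogeneous of degree `-n`. This subgroup is
nonzero, hence equal to `ℓℤ` for some `ℓ > 0`; pick a nonzero, hence invertible, `Y ∈ B_ℓ`.
A nonzero homogeneous `x` of degree `kℓ` factors as `(x Y⁻ᵏ) Yᵏ` with `x Y⁻ᵏ ∈ B₀`, and every
element of `B` is a sum of homogeneous ones.
-/

open DirectSum

namespace GradedRing

variable {ι R σ : Type*} [DecidableEq ι] [AddGroup ι] [SetLike σ R] (𝒜 : ι → σ)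

section Semiring

variable [Semiring R] [AddSubmonoidClass σ R] [GradedRing 𝒜]

theorem val_inv_mem_neg {u : Rˣ} {i : ι} (hu : (u : R) ∈ 𝒜 i) : ((u⁻¹ : Rˣ) : R) ∈ 𝒜 (-i) := by
  set v := (decompose 𝒜 ((u⁻¹ : Rˣ) : R) (-i) : R)
  have huv : (u : R) * v = 1 := by
    rw [← coe_decompose_mul_add_of_left_mem 𝒜 hu, Units.mul_inv, add_neg_cancel,
      decompose_of_mem_same 𝒜 SetLike.GradedOne.one_mem]
  have : ((u⁻¹ : Rˣ) : R) = v := by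
    rw [← one_mul v, ← Units.inv_mul u, mul_assoc, huv, mul_one]
  exact this ▸ SetLike.coe_mem _

theorem val_zpow_mem {u : Rˣ} {i : ι} (hu : (u : R) ∈ 𝒜 i) (k : ℤ) :
    ((u ^ k : Rˣ) : R) ∈ 𝒜 (k • i) := by
  cases k with
  | ofNat n => simpa using SetLike.pow_mem_graded n hu
  | negSucc n =>
    simpa [zpow_negSucc, negSucc_zsmul] using
      SetLike.pow_mem_graded (n + 1) (val_inv_mem_neg 𝒜 hu)

def degreeSupport [Nontrivial R] (hgr : ∀ (i : ι) (x : R), x ∈ 𝒜 i → x ≠ 0 → IsUnit x) :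
    AddSubgroup ι where
  carrier := {i | ∃ x ∈ 𝒜 i, x ≠ 0}
  zero_mem' := ⟨1, SetLike.GradedOne.one_mem, one_ne_zero⟩
  add_mem' := by
    rintro i j ⟨x, hx, hx0⟩ ⟨y, hy, hy0⟩
    exact ⟨x * y, SetLike.mul_mem_graded hx hy, ((hgr i x hx hx0).mul (hgr j y hy hy0)).ne_zero⟩
  neg_mem' := by
    rintro i ⟨x, hx, hx0⟩
    obtain ⟨u, rfl⟩ := hgr i x hx hx0
    exact ⟨_, val_inv_mem_neg 𝒜 hx, u⁻¹.ne_zero⟩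

end Semiring

section Ring

variable [Ring R] [AddSubgroupClass σ R] [GradedRing 𝒜]

theorem mem_closure_of_mem_zsmul {Y : Rˣ} {ℓ : ι} (hY : (Y : R) ∈ 𝒜 ℓ) {k : ℤ} {x : R}
    (hx : x ∈ 𝒜 (k • ℓ)) : x ∈ Subring.closure ((𝒜 0 : Set R) ∪ {(Y : R), ((Y⁻¹ : Rˣ) : R)}) := by
  set C := Subring.closure ((𝒜 0 : Set R) ∪ {(Y : R), ((Y⁻¹ : Rˣ) : R)})
  have hx₀ : x * ((Y ^ (-k) : Rˣ) : R) ∈ 𝒜 0 := by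
    simpa using SetLike.mul_mem_graded hx (val_zpow_mem 𝒜 hY (-k))
  have hYk : ((Y ^ k : Rˣ) : R) ∈ C := by
    have hY' : Y ∈ (C.units : Subgroup Rˣ) :=
      ⟨Subring.subset_closure (by simp), Subring.subset_closure (by simp)⟩
    exact (zpow_mem hY' k).1
  have hfactor : x = x * ((Y ^ (-k) : Rˣ) : R) * ((Y ^ k : Rˣ) : R) := by
    rw [mul_assoc, ← Units.val_mul, ← zpow_add, neg_add_cancel, zpow_zero, Units.val_one, mul_one]
  rw [hfactor]
  exact mul_mem (Subring.subset_closure (Or.inl hx₀)) hYk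

theorem closure_zero_union_unit_eq_top {Y : Rˣ} {ℓ : ι} (hY : (Y : R) ∈ 𝒜 ℓ)
    (hdeg : ∀ (i : ι) (x : R), x ∈ 𝒜 i → x ≠ 0 → i ∈ AddSubgroup.zmultiples ℓ) :
    Subring.closure ((𝒜 0 : Set R) ∪ {(Y : R), ((Y⁻¹ : Rˣ) : R)}) = ⊤ := by
  classical
  refine eq_top_iff.2 fun b _ ↦ ?_
  rw [← sum_support_decompose 𝒜 b]
  refine sum_mem fun i hi ↦ ?_
  obtain ⟨k, rfl⟩ := hdeg i _ (SetLike.coe_mem _) fun h ↦ DFinsupp.mem_support_iff.1 hi (ZeroMemClass.coe_eq_zero.1 h)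
  exact mem_closure_of_mem_zsmul 𝒜 hY (SetLike.coe_mem _)

end Ring

end GradedRing

theorem Int.exists_pos_eq_zmultiples {H : AddSubgroup ℤ} (hH : H ≠ ⊥) :
    ∃ ℓ : ℤ, 0 < ℓ ∧ H = AddSubgroup.zmultiples ℓ := by
  obtain ⟨a, rfl⟩ := Int.subgroup_cyclic H
  rw [← AddSubgroup.zmultiples_eq_closure, ← Int.zmultiples_natAbs] at *
  refine ⟨a.natAbs, Int.natCast_pos.2 (Int.natAbs_pos.2 ?_), rfl⟩
  rintro rfl
  simp at hH

theorem grField_is_laurent_over_degree_zero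
    (B : Type*) [CommRing B] (𝒜 : ℤ → AddSubgroup B) [GradedRing 𝒜]
    -- gr-field: every nonzero homogeneous element is a unit
    (hgr : ∀ (n : ℤ) (x : B), x ∈ 𝒜 n → x ≠ 0 → IsUnit x)
    -- some nonzero component in nonzero degree
    (hne : ∃ n : ℤ, n ≠ 0 ∧ 𝒜 n ≠ ⊥) :
    ∃ ℓ : ℤ, 0 < ℓ ∧ ∃ Y : Bˣ, (Y : B) ∈ 𝒜 ℓ ∧
      Subring.closure ((𝒜 0 : Set B) ∪ {(Y : B), ((Y⁻¹ : Bˣ) : B)}) = ⊤ := by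
  obtain ⟨n₀, hn₀, hA⟩ := hne
  obtain ⟨x₀, hx₀, hx₀0⟩ := (AddSubgroup.bot_or_exists_ne_zero _).resolve_left hA
  have : Nontrivial B := ⟨⟨x₀, 0, hx₀0⟩⟩
  set S := GradedRing.degreeSupport 𝒜 hgr
  have hS : S ≠ ⊥ := fun h ↦ hn₀ <| (AddSubgroup.mem_bot).1 (h ▸ ⟨x₀, hx₀, hx₀0⟩)
  obtain ⟨ℓ, hℓ, hSℓ⟩ := Int.exists_pos_eq_zmultiples hS
  obtain ⟨y, hy, hy0⟩ : ℓ ∈ S := hSℓ ▸ AddSubgroup.mem_zmultiples ℓ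
  obtain ⟨Y, rfl⟩ := hgr ℓ y hy hy0
  exact ⟨ℓ, hℓ, Y, hy, GradedRing.closure_zero_union_unit_eq_top 𝒜 hy
    fun i x hx hx0 ↦ hSℓ ▸ ⟨x, hx, hx0⟩⟩
end

section
/- Let $B$ be a prime Noetherian ring of Krull dimension $1$ which is semilocal with $J(B) \neq 0$. Then $B$ is right bounded: every essential right ideal of $B$ contains a nonzero two-sided ideal of $B$. -/
/-!
Pass to `A = Bᵐᵒᵖ`, whose left ideals are the right ideals of `B`. In a prime left Noetherian
ring every nonzero left ideal contains a non-nilpotent element (Utumi), and a large power of it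
has stable left annihilator (Fitting); summing such elements one after another inside an
essential left ideal `I` produces a right regular `c ∈ I` (Goldie). Since `r ↦ r c^n` identifies
`A / A c` with `A c^n / A c^(n+1)`, Krull dimension at most one forces `A / A c`, hence `A / I`,
to be Artinian. In the Artinian and Noetherian module `A / I` the chain `J^n (A / I)` stabilises,
so Nakayama gives `J^n ⊆ I`; and `J^n` is a two-sided ideal, nonzero because `A` is prime.
-/

/-- Gabriel–Rentschler Krull dimension at most `1`. -/
def KrullDimLEOne (R M : Type*) [Ring R] [AddCommGroup M] [Module R M] : Prop :=
  ∀ N : ℕ → Submodule R M, (∀ n : ℕ, N (n + 1) ≤ N n) →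
    ∃ t : ℕ, ∀ n ≥ t, IsArtinian R (↥(N n) ⧸ (Submodule.comap (N n).subtype (N (n + 1))))

open MulOpposite LinearMap Filter

section

variable {R : Type*} [Ring R]

-- Jacobson's lemma, read off the spectrum over `ℤ` at `-1`.
theorem isUnit_mul_add_one_comm {a b : R} : IsUnit (a * b + 1) ↔ IsUnit (b * a + 1) := by
  have := (spectrum.unit_mem_mul_comm (R := ℤ) (a := a) (b := b) (r := -1)).not
  simp only [spectrum.mem_iff, not_not, Units.val_neg, Units.val_one, map_neg, map_one] at this
  rwa [← neg_add', IsUnit.neg_iff, ← neg_add', IsUnit.neg_iff, add_comm, add_comm 1] at this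

theorem mem_jacobson_iff_forall_isUnit {x : R} :
    x ∈ Ring.jacobson R ↔ ∀ y, IsUnit (y * x + 1) := by
  rw [← Ideal.jacobson_bot, Ideal.mem_jacobson_iff]
  simp only [Submodule.mem_bot, sub_eq_zero, mul_assoc, ← mul_add_one]
  refine ⟨fun h y => ?_, fun h y => ?_⟩
  · obtain ⟨z, hz⟩ := h y
    -- `z = 1 - z y x` has a left inverse too, so `z` is a unit with inverse `y x + 1`
    obtain ⟨w, hw⟩ := h (-(z * y))
    have hz' : -(z * y) * x + 1 = z := by
      rw [← hz]; noncomm_ring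
    rw [hz'] at hw
    exact ⟨⟨_, z, left_inv_eq_right_inv hw hz ▸ hw, hz⟩, rfl⟩
  · obtain ⟨u, hu⟩ := h y
    exact ⟨↑u⁻¹, by rw [← hu, Units.inv_mul]⟩

theorem op_mem_jacobson {x : R} (hx : x ∈ Ring.jacobson R) :
    op x ∈ Ring.jacobson Rᵐᵒᵖ := by
  rw [mem_jacobson_iff_forall_isUnit] at hx ⊢
  intro y
  simpa using isUnit_op.mpr (isUnit_mul_add_one_comm.mp (hx (unop y)))

theorem jacobson_op_ne_bot (h : Ring.jacobson R ≠ ⊥) : Ring.jacobson Rᵐᵒᵖ ≠ ⊥ := by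
  obtain ⟨x, hx, hx0⟩ := Submodule.exists_mem_ne_zero_of_ne_bot h
  exact (Submodule.ne_bot_iff _).mpr ⟨op x, op_mem_jacobson hx, by simpa using hx0⟩

theorem isNilpotent_mul_comm {a b : R} : IsNilpotent (a * b) ↔ IsNilpotent (b * a) := by
  suffices ∀ a b : R, IsNilpotent (a * b) → IsNilpotent (b * a) from ⟨this a b, this b a⟩
  rintro a b ⟨n, hn⟩
  exact ⟨n + 1, by rw [pow_succ, ← mul_assoc, mul_pow_mul, hn, mul_zero, zero_mul]⟩

theorem IsNilpotent.exists_pow_succ_ne_zero {b : R} (hb : IsNilpotent b) (hb0 : b ≠ 0) :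
    ∃ n, b ^ (n + 1) ≠ 0 ∧ b ^ (n + 2) = 0 := by
  have : Nontrivial R := nontrivial_of_ne b 0 hb0
  obtain ⟨n, hn⟩ : ∃ n, nilpotencyClass b = n + 2 := by
    have h0 := pos_nilpotencyClass_iff.mpr hb
    have h1 : nilpotencyClass b ≠ 1 := fun h => hb0 (nilpotencyClass_eq_one.mp h)
    exact ⟨nilpotencyClass b - 2, by omega⟩
  exact ⟨n, (nilpotencyClass_eq_succ_iff.mp hn).symm⟩

end

def Submodule.IsEssential {R M : Type*} [Semiring R] [AddCommMonoid M] [Module R M]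
    (N : Submodule R M) : Prop :=
  ∀ N' : Submodule R M, N' ⊓ N = ⊥ → N' = ⊥

theorem Submodule.IsEssential.map_equiv {R M M' : Type*} [Semiring R] [AddCommMonoid M]
    [AddCommMonoid M'] [Module R M] [Module R M'] {N : Submodule R M} (hN : N.IsEssential)
    (e : M ≃ₗ[R] M') : (N.map (e : M →ₗ[R] M')).IsEssential := by
  intro N' h
  let f := Submodule.orderIsoMapComap e
  have : f.symm N' ⊓ N = ⊥ := by
    apply f.injective
    rw [f.map_inf, f.apply_symm_apply, f.map_bot]
    exact h
  simpa using congrArg f (hN _ this)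

def IsPrimeRing (A : Type*) [Ring A] : Prop :=
  ∀ a b : A, (∀ x : A, a * x * b = 0) → a = 0 ∨ b = 0

namespace IsPrimeRing

variable {A : Type*} [Ring A]

protected theorem op (hA : IsPrimeRing A) : IsPrimeRing Aᵐᵒᵖ := by
  intro a b h
  refine (hA b.unop a.unop fun x => ?_).symm.imp (unop_eq_zero_iff _).mp (unop_eq_zero_iff _).mp
  simpa [mul_assoc] using congrArg unop (h (op x))

theorem pow_ne_bot (hA : IsPrimeRing A) {J : Ideal A} [J.IsTwoSided] (hJ : J ≠ ⊥) (n : ℕ) :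
    J ^ n ≠ ⊥ := by
  induction n with
  | zero =>
    rw [Submodule.pow_zero, Ideal.one_eq_top]
    exact fun h => hJ (eq_bot_iff.mpr (h ▸ le_top))
  | succ n ih =>
    obtain ⟨a, ha, ha0⟩ := Submodule.exists_mem_ne_zero_of_ne_bot ih
    obtain ⟨b, hb, hb0⟩ := Submodule.exists_mem_ne_zero_of_ne_bot hJ
    intro h
    refine (hA a b fun x => ?_).elim ha0 hb0
    rw [← Submodule.mem_bot A, ← h, Submodule.pow_succ]
    exact Ideal.mul_mem_mul (Ideal.mul_mem_right x _ ha) hb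

variable [IsNoetherianRing A]

theorem exists_not_isNilpotent_mul (hA : IsPrimeRing A) {d : A} (hd : d ≠ 0) :
    ∃ r, ¬IsNilpotent (d * r) := by
  by_contra! hnil
  obtain ⟨_, ⟨a, ⟨ha0, ha⟩, rfl⟩, hmax⟩ := set_has_maximal_iff_noetherian.mpr ‹_›
    ((fun x => (mulRight A x).ker) '' {x | x ≠ 0 ∧ ∀ r, IsNilpotent (x * r)})
    ⟨_, d, ⟨hd, hnil⟩, rfl⟩
  simp only [Set.forall_mem_image] at hmax
  refine ha0 ((hA a a fun r => ?_).elim id id)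
  by_contra hara
  have hb0 : a * r ≠ 0 := fun h => hara (by rw [h, zero_mul])
  obtain ⟨n, hn0, hn⟩ := (ha r).exists_pow_succ_ne_zero hb0
  -- `d' ∈ a A`, so its left annihilator contains that of `a`, and also `a r`
  set d' := (a * r) ^ (n + 1) with hd'_def
  have hd' : d' = a * (r * (a * r) ^ n) := by rw [hd'_def, pow_succ', mul_assoc]
  refine hmax ⟨hn0, fun s => by simpa [hd', mul_assoc] using ha (r * (a * r) ^ n * s)⟩
    (lt_of_le_of_ne (fun z hz => ?_) fun h => hara ?_)
  · simp only [LinearMap.mem_ker, mulRight_apply] at hz ⊢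
    rw [hd', ← mul_assoc, hz, zero_mul]
  · have : a * r ∈ (mulRight A d').ker := by
      simpa [d', ← pow_succ'] using hn
    rw [← h] at this
    simpa [mul_assoc] using this

theorem exists_not_isNilpotent_mem (hA : IsPrimeRing A) {K : Ideal A} (hK : K ≠ ⊥) :
    ∃ a ∈ K, ¬IsNilpotent a := by
  obtain ⟨d, hdK, hd⟩ := Submodule.exists_mem_ne_zero_of_ne_bot hK
  obtain ⟨r, hr⟩ := hA.exists_not_isNilpotent_mul hd
  exact ⟨r * d, K.mul_mem_left r hdK, isNilpotent_mul_comm.not.mp hr⟩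

end IsPrimeRing

theorem eventually_ker_mulRight_pow_mul_pow_le {A : Type*} [Ring A] [IsNoetherianRing A] (a : A) :
    ∀ᶠ n in atTop, (mulRight A (a ^ n * a ^ n)).ker ≤ (mulRight A (a ^ n)).ker := by
  filter_upwards [Module.End.eventually_disjoint_ker_pow_range_pow (mulRight A a)] with n hn z hz
  rw [pow_mulRight] at hn
  simp only [LinearMap.mem_ker, mulRight_apply, ← mul_assoc] at hz ⊢
  exact Submodule.disjoint_def.mp hn _ hz ⟨z, rfl⟩

theorem IsPrimeRing.exists_mem_ne_zero_ker_mulRight_mul_self_le {A : Type*} [Ring A]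
    [IsNoetherianRing A] (hA : IsPrimeRing A) {K : Ideal A} (hK : K ≠ ⊥) :
    ∃ c ∈ K, c ≠ 0 ∧ (mulRight A (c * c)).ker ≤ (mulRight A c).ker := by
  obtain ⟨a, haK, ha⟩ := hA.exists_not_isNilpotent_mem hK
  obtain ⟨n, hn, hn1⟩ :=
    ((eventually_ker_mulRight_pow_mul_pow_le a).and (eventually_ge_atTop 1)).exists
  obtain ⟨m, rfl⟩ := Nat.exists_eq_add_of_le' hn1
  exact ⟨a ^ (m + 1), by rw [pow_succ]; exact K.mul_mem_left _ haK, fun h => ha ⟨_, h⟩, hn⟩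

section Goldie

variable {A : Type*} [Ring A]

/-- Whenever `t * s = 0`, the left annihilator of `s + t` is contained in that of `s`
(hence equals the intersection of the left annihilators of `s` and `t`). -/
def IsAnnSplitting (s : A) : Prop :=
  ∀ t z : A, t * s = 0 → z * (s + t) = 0 → z * s = 0

theorem isAnnSplitting_zero : IsAnnSplitting (0 : A) :=
  fun _ _ _ _ => mul_zero _

theorem IsAnnSplitting.add {s c : A} (hs : IsAnnSplitting s) (hcs : c * s = 0)
    (hc : (mulRight A (c * c)).ker ≤ (mulRight A c).ker) : IsAnnSplitting (s + c) := by
  intro t z hts hz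
  have ht : t * s = 0 := hs c t hcs (by rw [← hts, mul_add])
  have htc : t * c = 0 := by rw [← hts, mul_add, ht, zero_add]
  have hzs : z * s = 0 :=
    hs (c + t) z (by rw [add_mul, hcs, ht, add_zero]) (by rw [← hz, add_assoc])
  have hzc : z * c = 0 := by
    refine hc ?_
    have : z * c * c = (z * (s + c + t) - z * s) * c - z * (t * c) := by noncomm_ring
    simp only [LinearMap.mem_ker, mulRight_apply, ← mul_assoc]
    rw [this, hz, hzs, htc, sub_zero, zero_mul, mul_zero, sub_zero]
  rw [mul_add, hzs, hzc, add_zero]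

theorem IsPrimeRing.exists_mem_isRightRegular [IsNoetherianRing A] (hA : IsPrimeRing A)
    {I : Ideal A} (hI : I.IsEssential) : ∃ c ∈ I, IsRightRegular c := by
  obtain ⟨W, ⟨s, hsI, hs, hWs⟩, hmax⟩ := set_has_maximal_iff_noetherian.mpr ‹_›
    {W : Ideal A | ∃ s ∈ I, IsAnnSplitting s ∧ W ⊓ (mulRight A s).ker = ⊥}
    ⟨⊥, 0, I.zero_mem, isAnnSplitting_zero, bot_inf_eq _⟩
  suffices hs0 : (mulRight A s).ker = ⊥ by
    refine ⟨s, hsI, isRightRegular_iff_left_eq_zero_of_mul.mpr fun z hz => ?_⟩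
    simpa [hs0] using (show z ∈ (mulRight A s).ker from hz)
  -- otherwise some `c` annihilating `s` enlarges `W` to `W + A c`, witnessed by `s + c`
  by_contra hne
  obtain ⟨c, ⟨hcs, hcI⟩, hc0, hc⟩ :=
    hA.exists_mem_ne_zero_ker_mulRight_mul_self_le fun h => hne (hI _ h)
  replace hcs : c * s = 0 := hcs
  have hcW : c ∉ W := fun h =>
    hc0 (by simpa [hcs] using (Submodule.eq_bot_iff _).mp hWs c ⟨h, hcs⟩)
  refine hmax (W ⊔ Ideal.span {c})
    ⟨s + c, add_mem hsI hcI, hs.add hcs hc, (Submodule.eq_bot_iff _).mpr ?_⟩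
    (lt_of_le_of_ne le_sup_left fun h =>
      hcW (h ▸ Ideal.mem_sup_right (Ideal.mem_span_singleton_self c)))
  rintro _ ⟨hyW, hy⟩
  obtain ⟨w, hw, _, hrc, rfl⟩ := Submodule.mem_sup.mp hyW
  obtain ⟨r, rfl⟩ := Ideal.mem_span_singleton'.mp hrc
  replace hy : (w + r * c) * (s + c) = 0 := hy
  have hws : w * s = 0 := by
    simpa [add_mul, mul_assoc, hcs] using hs c _ hcs hy
  obtain rfl : w = 0 := (Submodule.eq_bot_iff _).mp hWs w ⟨hw, hws⟩
  have : r ∈ (mulRight A c).ker := hc (by simpa [mul_add, hws, mul_assoc, hcs] using hy)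
  simpa using this

end Goldie

section KrullDimension

variable {A : Type*} [Ring A]

theorem isArtinian_quotient_span_singleton_of_isRightRegular (hK : KrullDimLEOne A A) {c : A}
    (hc : IsRightRegular c) : IsArtinian A (A ⧸ Ideal.span {c}) := by
  let N : ℕ → Ideal A := fun n => Ideal.span {c ^ n}
  have hN (n : ℕ) : N (n + 1) ≤ N n := (Submodule.span_singleton_le_iff_mem _ _).mpr
    (Ideal.mem_span_singleton'.mpr ⟨c, (pow_succ' c n).symm⟩)
  obtain ⟨t, ht⟩ := hK N hN
  have := ht t le_rfl
  let φ : A →ₗ[A] N t :=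
    (mulRight A (c ^ t)).codRestrict (N t) fun r => Ideal.mem_span_singleton'.mpr ⟨r, rfl⟩
  let ψ := (Submodule.comap (N t).subtype (N (t + 1))).mkQ ∘ₗ φ
  have hψ : Function.Surjective ψ := (Submodule.mkQ_surjective _).comp fun ⟨x, hx⟩ => by
    obtain ⟨r, rfl⟩ := Ideal.mem_span_singleton'.mp hx
    exact ⟨r, rfl⟩
  have hker : ker ψ = Ideal.span {c} := by
    ext r
    simp only [ψ, φ, LinearMap.mem_ker, LinearMap.comp_apply, Submodule.mkQ_apply,
      Submodule.Quotient.mk_eq_zero, Submodule.mem_comap, Submodule.coe_subtype,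
      LinearMap.codRestrict_apply, mulRight_apply, N, Ideal.mem_span_singleton', pow_succ',
      ← mul_assoc, (hc.pow t).eq_iff]
  exact isArtinian_of_linearEquiv
    ((Submodule.quotEquivOfEq _ _ hker.symm).trans (ψ.quotKerEquivOfSurjective hψ)).symm

theorem IsPrimeRing.isArtinian_quotient_of_isEssential [IsNoetherianRing A] (hA : IsPrimeRing A)
    (hK : KrullDimLEOne A A) {I : Ideal A} (hI : I.IsEssential) : IsArtinian A (A ⧸ I) := by
  obtain ⟨c, hcI, hc⟩ := hA.exists_mem_isRightRegular hI
  have := isArtinian_quotient_span_singleton_of_isRightRegular hK hc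
  exact isArtinian_of_surjective _ _
    (Submodule.factor_surjective ((Submodule.span_singleton_le_iff_mem _ _).mpr hcI))

end KrullDimension

theorem exists_jacobson_pow_smul_top_eq_bot (A M : Type*) [Ring A] [AddCommGroup M] [Module A M]
    [IsArtinian A M] [IsNoetherian A M] :
    ∃ n, Ring.jacobson A ^ n • (⊤ : Submodule A M) = ⊥ := by
  let V : ℕ → Submodule A M := fun n => Ring.jacobson A ^ n • ⊤
  have hV : Antitone V := antitone_nat_of_succ_le fun n => by
    simp only [V, Submodule.pow_succ, Submodule.mul_smul]
    exact Submodule.smul_mono le_rfl le_top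
  obtain ⟨n, hn⟩ := IsArtinian.monotone_stabilizes ⟨V, fun _ _ h => hV h⟩
  refine ⟨n + 1, (IsNoetherian.noetherian _).eq_bot_of_le_jacobson_smul (le_of_eq ?_)⟩
  calc V (n + 1) = V (n + 1 + 1) := (hn _ n.le_succ).symm.trans (hn _ (by omega))
    _ = _ := by simp only [V, Submodule.pow_succ' _ n.succ_ne_zero, Submodule.mul_smul]

theorem IsPrimeRing.exists_ne_zero_mul_mul_mem_of_isEssential {A : Type*} [Ring A]
    [IsNoetherianRing A] (hA : IsPrimeRing A) (hK : KrullDimLEOne A A)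
    (hJ : Ring.jacobson A ≠ ⊥) {I : Ideal A} (hI : I.IsEssential) :
    ∃ x ≠ 0, ∀ a b, a * x * b ∈ I := by
  have := hA.isArtinian_quotient_of_isEssential hK hI
  obtain ⟨n, hn⟩ := exists_jacobson_pow_smul_top_eq_bot A (A ⧸ I)
  obtain ⟨x, hx, hx0⟩ := Submodule.exists_mem_ne_zero_of_ne_bot (hA.pow_ne_bot hJ n)
  refine ⟨x, hx0, fun a b => ?_⟩
  have hmem : a * x * b ∈ Ring.jacobson A ^ n :=
    Ideal.mul_mem_right _ _ (Ideal.mul_mem_left _ a hx)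
  rw [← Submodule.Quotient.mk_eq_zero, ← mul_one (a * x * b), ← smul_eq_mul,
    Submodule.Quotient.mk_smul, ← Submodule.mem_bot A, ← hn]
  exact Submodule.smul_mem_smul hmem Submodule.mem_top

theorem prime_noetherian_kdim_one_semilocal_is_right_bounded_general
    (B : Type*) [Ring B]
    [IsNoetherianRing Bᵐᵒᵖ]
    -- `B` is prime
    (hprime : ∀ a b : B, (∀ x : B, a * x * b = 0) → a = 0 ∨ b = 0)
    -- Krull dimension exactly one (at most one on both sides, not Artinian)
    (hK1' : KrullDimLEOne Bᵐᵒᵖ Bᵐᵒᵖ)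
    -- `J(B) ≠ 0`
    (hJ : (⊥ : Ideal B).jacobson ≠ ⊥) :
    ∀ I : Submodule Bᵐᵒᵖ B,
      (∀ J : Submodule Bᵐᵒᵖ B, J ⊓ I = ⊥ → J = ⊥) →  -- `I` essential right ideal
      ∃ x : B, x ≠ 0 ∧ ∀ a b : B, a * x * b ∈ I := by
  intro I hI
  let e : B ≃ₗ[Bᵐᵒᵖ] Bᵐᵒᵖ := opLinearEquiv Bᵐᵒᵖ
  rw [Ideal.jacobson_bot] at hJ
  obtain ⟨x, hx0, hx⟩ := IsPrimeRing.exists_ne_zero_mul_mul_mem_of_isEssential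
    (IsPrimeRing.op hprime) hK1' (jacobson_op_ne_bot hJ) (Submodule.IsEssential.map_equiv hI e)
  refine ⟨x.unop, by simpa using hx0, fun a b => ?_⟩
  simpa [Submodule.mem_map_equiv, e, mul_assoc] using hx (op b) (op a)

theorem prime_noetherian_kdim_one_semilocal_is_right_bounded
    (B : Type*) [Ring B] [Nontrivial B]
    [IsNoetherianRing B] [IsNoetherianRing Bᵐᵒᵖ]
    -- `B` is prime
    (hprime : ∀ a b : B, (∀ x : B, a * x * b = 0) → a = 0 ∨ b = 0)
    -- Krull dimension exactly one (at most one on both sides, not Artinian)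
    (hK1 : KrullDimLEOne B B) (hK1' : KrullDimLEOne Bᵐᵒᵖ Bᵐᵒᵖ)
    (hnotart : ¬ IsArtinianRing B)
    -- semilocal: `B/J(B)` is Artinian
    (hsemilocal : IsArtinian B (B ⧸ ((⊥ : Ideal B).jacobson)))
    -- `J(B) ≠ 0`
    (hJ : (⊥ : Ideal B).jacobson ≠ ⊥) :
    ∀ I : Submodule Bᵐᵒᵖ B,
      (∀ J : Submodule Bᵐᵒᵖ B, J ⊓ I = ⊥ → J = ⊥) →  -- `I` essential right ideal
      ∃ x : B, x ≠ 0 ∧ ∀ a b : B, a * x * b ∈ I :=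
  prime_noetherian_kdim_one_semilocal_is_right_bounded_general B hprime hK1' hJ
end

section
/- Let $A$ be a Noetherian ring, $z \in J(A)$ a regular normal element with $A/zA$ Artinian and $A$ $z$-adically complete. Suppose $I_1 \supseteq I_2 \supseteq I_3 \supseteq \cdots$ is a descending chain of left ideals of $A$ such that $I_n \not\subseteq Az$ for all $n$. Then $\bigcap_{n=1}^\infty I_n \neq 0$. -/
/-- `z`-adic completeness of a ring. -/
def ZAdicComplete (A : Type*) [Ring A] (z : A) : Prop :=
  ∀ f : ℕ → A,
    (∀ n : ℕ, ∃ t : ℕ, ∀ i ≥ t, ∀ j ≥ t, f i - f j ∈ Ideal.span {z ^ n}) →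
    ∃ L : A, ∀ n : ℕ, ∃ t : ℕ, ∀ i ≥ t, f i - L ∈ Ideal.span {z ^ n}

/-!
The quotients `A/z^kA` are Artinian, being successive extensions of copies of `A/zA`, so modulo
each `z^k` the chain `I n` stabilises, from `I (N k)` on. Starting from `a ∈ I (N 1)` outside
`Az` and lifting successively through `I (N 2), I (N 3), …` modulo `z^2, z^3, …` gives a
`z`-adic Cauchy sequence; its limit `L` is congruent to `a` modulo `z`, hence nonzero, and lies
in `I n + z^kA` for all `n` and `k`. Finally, left ideals `J` are `z`-adically closed: if `x` is
approximated by `i k ∈ J`, Artin–Rees makes the increments of `i` eventually `z^k` times elements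
of `J`, so (`J` being finitely generated and `A` complete) their series converges inside `J`, and
Krull's intersection theorem (Nakayama applied to `⋂ z^kA = z ⋂ z^kA`) identifies its limit
with `x`.
-/

open Finset

section

variable {A : Type*} [Ring A] {z : A}

theorem span_pow_antitone : Antitone fun k : ℕ => Ideal.span {z ^ k} := by
  intro k m hkm
  rw [Ideal.span_le, Set.singleton_subset_iff, SetLike.mem_coe, Ideal.mem_span_singleton']
  exact ⟨z ^ (m - k), by rw [← pow_add, Nat.sub_add_cancel hkm]⟩

theorem exists_pow_mul_eq_mul_pow (hnorm₁ : ∀ a : A, ∃ b : A, z * a = b * z) (k : ℕ) (a : A) :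
    ∃ b, z ^ k * a = b * z ^ k := by
  induction k generalizing a with
  | zero => exact ⟨a, by simp⟩
  | succ k ih =>
    obtain ⟨b, hb⟩ := hnorm₁ a
    obtain ⟨c, hc⟩ := ih b
    exact ⟨c, by rw [pow_succ, mul_assoc, hb, ← mul_assoc, hc, mul_assoc]⟩

theorem exists_mul_pow_eq_pow_mul (hnorm₂ : ∀ a : A, ∃ b : A, a * z = z * b) (k : ℕ) (a : A) :
    ∃ b, a * z ^ k = z ^ k * b := by
  induction k generalizing a with
  | zero => exact ⟨a, by simp⟩
  | succ k ih =>
    obtain ⟨b, hb⟩ := hnorm₂ a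
    obtain ⟨c, hc⟩ := ih b
    exact ⟨c, by rw [pow_succ', ← mul_assoc, hb, mul_assoc, hc, ← mul_assoc]⟩

theorem span_pow_isTwoSided (hnorm₁ : ∀ a : A, ∃ b : A, z * a = b * z) (k : ℕ) :
    (Ideal.span {z ^ k}).IsTwoSided := by
  refine ⟨fun w hv => ?_⟩
  obtain ⟨a, rfl⟩ := Ideal.mem_span_singleton'.mp hv
  obtain ⟨b, hb⟩ := exists_pow_mul_eq_mul_pow hnorm₁ k w
  rw [mul_assoc, hb, ← mul_assoc]
  exact Ideal.mul_mem_left _ _ (Ideal.mem_span_singleton_self _)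

theorem pow_mul_mem_span_pow (hnorm₁ : ∀ a : A, ∃ b : A, z * a = b * z) (k : ℕ) (b : A) :
    z ^ k * b ∈ Ideal.span {z ^ k} :=
  (span_pow_isTwoSided hnorm₁ k).mul_mem_of_left b (Ideal.mem_span_singleton_self _)

theorem exists_eq_pow_mul_of_mem_span_pow (hnorm₂ : ∀ a : A, ∃ b : A, a * z = z * b) {k : ℕ}
    {x : A} (hx : x ∈ Ideal.span {z ^ k}) : ∃ b, x = z ^ k * b := by
  obtain ⟨a, rfl⟩ := Ideal.mem_span_singleton'.mp hx
  exact exists_mul_pow_eq_pow_mul hnorm₂ k a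

theorem eq_zero_of_forall_mem_span_pow [IsNoetherianRing A] (hzJ : z ∈ (⊥ : Ideal A).jacobson)
    (hreg₁ : ∀ a : A, z * a = 0 → a = 0) (hnorm₁ : ∀ a : A, ∃ b : A, z * a = b * z)
    (hnorm₂ : ∀ a : A, ∃ b : A, a * z = z * b) {x : A}
    (hx : ∀ k : ℕ, x ∈ Ideal.span {z ^ k}) : x = 0 := by
  set N := ⨅ k : ℕ, Ideal.span {z ^ k}
  suffices hN : N = ⊥ by
    have hxN : x ∈ N := Submodule.mem_iInf _ |>.mpr hx
    rwa [hN, Submodule.mem_bot] at hxN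
  -- `N = z N`, so Nakayama's lemma applies
  refine Submodule.FG.eq_bot_of_le_jacobson_smul (IsNoetherian.noetherian N) fun y hy => ?_
  rw [Submodule.mem_iInf] at hy
  obtain ⟨b, rfl⟩ := exists_eq_pow_mul_of_mem_span_pow hnorm₂ (hy 1)
  have hb : b ∈ N := Submodule.mem_iInf _ |>.mpr fun k => by
    obtain ⟨c, hc⟩ := exists_eq_pow_mul_of_mem_span_pow hnorm₂ (hy (k + 1))
    rw [pow_one, pow_succ', mul_assoc] at hc
    rw [isLeftRegular_iff_right_eq_zero_of_mul.mpr hreg₁ hc]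
    exact pow_mul_mem_span_pow hnorm₁ k c
  rw [pow_one]
  exact Submodule.smul_mem_smul (Ideal.jacobson_bot (R := A) ▸ hzJ) hb

theorem sub_mem_span_pow_of_forall_succ_sub_mem {f : ℕ → A}
    (hf : ∀ i, f (i + 1) - f i ∈ Ideal.span {z ^ (i + 1)}) {i j : ℕ} (hji : j ≤ i) :
    f i - f j ∈ Ideal.span {z ^ (j + 1)} := by
  induction i, hji using Nat.le_induction with
  | base => simp
  | succ i hji ih =>
    rw [← sub_add_sub_cancel]
    exact add_mem (span_pow_antitone (by omega) (hf i)) ih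

theorem ZAdicComplete.exists_forall_sub_mem (hcomp : ZAdicComplete A z) {f : ℕ → A}
    (hf : ∀ i, f (i + 1) - f i ∈ Ideal.span {z ^ (i + 1)}) :
    ∃ L, ∀ i, L - f i ∈ Ideal.span {z ^ (i + 1)} := by
  have hcauchy : ∀ n : ℕ, ∃ t, ∀ i ≥ t, ∀ j ≥ t, f i - f j ∈ Ideal.span {z ^ n} := by
    refine fun n => ⟨n, fun i hi j hj => ?_⟩
    rcases le_total j i with h | h
    · exact span_pow_antitone (by omega) (sub_mem_span_pow_of_forall_succ_sub_mem hf h)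
    · rw [← neg_sub]
      exact neg_mem (span_pow_antitone (by omega) (sub_mem_span_pow_of_forall_succ_sub_mem hf h))
  obtain ⟨L, hL⟩ := hcomp f hcauchy
  refine ⟨L, fun i => ?_⟩
  obtain ⟨t, ht⟩ := hL (i + 1)
  rw [← sub_sub_sub_cancel_left (f i) L (f (max t i))]
  exact sub_mem (sub_mem_span_pow_of_forall_succ_sub_mem hf (le_max_right t i))
    (ht _ (le_max_left t i))

theorem ZAdicComplete.exists_mem_forall_sub_sum_mem [IsNoetherianRing A]
    (hcomp : ZAdicComplete A z) (hnorm₁ : ∀ a : A, ∃ b : A, z * a = b * z) {J : Ideal A}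
    {y : ℕ → A} (hy : ∀ k, y k ∈ J) :
    ∃ s ∈ J, ∀ K, s - ∑ k ∈ range (K + 1), z ^ k * y k ∈ Ideal.span {z ^ (K + 1)} := by
  obtain ⟨t, rfl⟩ := IsNoetherian.noetherian J
  choose F hF using fun k => (Submodule.mem_span_finset.mp (hy k)).imp fun _ h => h.2
  -- sum coefficientwise: each coefficient series converges by completeness
  set P : A → ℕ → A := fun w K => ∑ k ∈ range (K + 1), z ^ k * F k w
  have hP : ∀ w i, P w (i + 1) - P w i ∈ Ideal.span {z ^ (i + 1)} := fun w i => by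
    simp only [P, sum_range_succ_sub_sum]
    exact pow_mul_mem_span_pow hnorm₁ _ _
  choose C hC using fun w => hcomp.exists_forall_sub_mem (hP w)
  refine ⟨∑ w ∈ t, C w * w,
    sum_mem fun w hw => Ideal.mul_mem_left _ _ (Ideal.subset_span hw), fun K => ?_⟩
  have hsum : ∑ k ∈ range (K + 1), z ^ k * y k = ∑ w ∈ t, P w K * w := by
    simp only [P, ← hF, mul_sum, sum_mul, smul_eq_mul, mul_assoc]
    exact sum_comm
  rw [hsum, ← sum_sub_distrib]
  refine sum_mem fun w _ => ?_
  rw [← sub_mul]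
  exact (span_pow_isTwoSided hnorm₁ _).mul_mem_of_left w (hC w K)

def leftColonPow (hnorm₁ : ∀ a : A, ∃ b : A, z * a = b * z) (J : Ideal A) (k : ℕ) :
    Ideal A where
  carrier := {a | z ^ k * a ∈ J}
  zero_mem' := by simp
  add_mem' {a b} ha hb := by
    change z ^ k * (a + b) ∈ J
    rw [mul_add]
    exact J.add_mem ha hb
  smul_mem' c a ha := by
    obtain ⟨b, hb⟩ := exists_pow_mul_eq_mul_pow hnorm₁ k c
    change z ^ k * (c * a) ∈ J
    rw [← mul_assoc, hb, mul_assoc]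
    exact J.mul_mem_left b ha

theorem leftColonPow_monotone (hnorm₁ : ∀ a : A, ∃ b : A, z * a = b * z) (J : Ideal A) :
    Monotone (leftColonPow hnorm₁ J) :=
  monotone_nat_of_le_succ fun k a ha => by
    change z ^ (k + 1) * a ∈ J
    rw [pow_succ', mul_assoc]
    exact J.mul_mem_left z ha

theorem exists_artinRees [IsNoetherianRing A] (hnorm₁ : ∀ a : A, ∃ b : A, z * a = b * z)
    (hnorm₂ : ∀ a : A, ∃ b : A, a * z = z * b) (J : Ideal A) :
    ∃ c, ∀ k, ∀ a ∈ J ⊓ Ideal.span {z ^ (k + c)}, ∃ y ∈ J, a = z ^ k * y := by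
  obtain ⟨c, hc⟩ := monotone_stabilizes_iff_noetherian.mpr inferInstance
    ⟨leftColonPow hnorm₁ J, leftColonPow_monotone hnorm₁ J⟩
  refine ⟨c, fun k a ha => ?_⟩
  obtain ⟨haJ, haz⟩ := Submodule.mem_inf.mp ha
  obtain ⟨b, rfl⟩ := exists_eq_pow_mul_of_mem_span_pow hnorm₂ haz
  have hb : b ∈ leftColonPow hnorm₁ J c := by
    rw [show leftColonPow hnorm₁ J c = leftColonPow hnorm₁ J (k + c) from
      hc (k + c) (by omega)]
    exact haJ
  exact ⟨z ^ c * b, hb, by rw [pow_add, mul_assoc]⟩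

theorem mem_of_forall_mem_sup_span_pow [IsNoetherianRing A] (hzJ : z ∈ (⊥ : Ideal A).jacobson)
    (hreg₁ : ∀ a : A, z * a = 0 → a = 0) (hnorm₁ : ∀ a : A, ∃ b : A, z * a = b * z)
    (hnorm₂ : ∀ a : A, ∃ b : A, a * z = z * b) (hcomp : ZAdicComplete A z) {J : Ideal A}
    {x : A} (hx : ∀ k, x ∈ J ⊔ Ideal.span {z ^ k}) : x ∈ J := by
  choose i hiJ r hr hir using fun k => Submodule.mem_sup.mp (hx k)
  obtain ⟨c, hc⟩ := exists_artinRees hnorm₁ hnorm₂ J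
  have hd : ∀ k, i (k + 1 + c) - i (k + c) ∈ J ⊓ Ideal.span {z ^ (k + c)} := fun k => by
    refine ⟨sub_mem (hiJ _) (hiJ _), ?_⟩
    rw [eq_sub_of_add_eq (hir _), eq_sub_of_add_eq (hir (k + c)), sub_sub_sub_cancel_left]
    exact sub_mem (hr _) (span_pow_antitone (by omega) (hr _))
  choose y hyJ hy using fun k => hc k _ (hd k)
  obtain ⟨s, hsJ, hs⟩ := hcomp.exists_mem_forall_sub_sum_mem hnorm₁ hyJ
  suffices x = i c + s from this ▸ add_mem (hiJ c) hsJ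
  rw [← sub_eq_zero]
  refine eq_zero_of_forall_mem_span_pow hzJ hreg₁ hnorm₁ hnorm₂ fun K =>
    span_pow_antitone K.le_succ ?_
  have htel : ∑ k ∈ range (K + 1), z ^ k * y k = i (K + 1 + c) - i c := by
    simpa only [← hy, zero_add] using sum_range_sub (fun k => i (k + c)) (K + 1)
  have hsplit : x - (i c + s) = r (K + 1 + c) - (s - ∑ k ∈ range (K + 1), z ^ k * y k) := by
    rw [htel, ← hir (K + 1 + c)]
    abel
  rw [hsplit]
  exact sub_mem (span_pow_antitone (by omega) (hr _)) (hs K)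

theorem isArtinian_quotient_span_pow (hart : IsArtinian A (A ⧸ Ideal.span {z})) (k : ℕ) :
    IsArtinian A (A ⧸ Ideal.span {z ^ k}) := by
  induction k with
  | zero =>
    rw [pow_zero, Ideal.span_singleton_one]
    infer_instance
  | succ k ih =>
    -- the exact sequence `A/zA → A/z^(k+1)A → A/z^kA → 0`, whose first map is `a ↦ a z^k`
    have hφ : Ideal.span {z} ≤
        Submodule.comap (LinearMap.toSpanSingleton A A (z ^ k))
          (Ideal.span {z ^ (k + 1)}) := by
      rw [Ideal.span_le, Set.singleton_subset_iff]
      simp [← pow_succ']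
    refine isArtinian_of_range_eq_ker (Submodule.mapQ _ _ _ hφ)
      (Submodule.factor (span_pow_antitone k.le_succ)) ?_
    rw [Submodule.range_mapQ, Submodule.ker_mapQ, Submodule.comap_id,
      ← LinearMap.span_singleton_eq_range]

theorem exists_forall_le_sup_of_isArtinian_quotient {R M : Type*} [Ring R] [AddCommGroup M]
    [Module R M] {S : Submodule R M} [IsArtinian R (M ⧸ S)] {I : ℕ → Submodule R M}
    (hI : Antitone I) : ∃ N, ∀ n, I N ≤ I n ⊔ S := by
  obtain ⟨N, hN⟩ := IsArtinian.monotone_stabilizes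
    (⟨fun n => OrderDual.toDual ((I n).map S.mkQ), fun _ _ h => Submodule.map_mono (hI h)⟩ :
      ℕ →o (Submodule R (M ⧸ S))ᵒᵈ)
  refine ⟨N, fun n => ?_⟩
  have hmap : (I N).map S.mkQ = (I (max N n)).map S.mkQ :=
    congrArg OrderDual.ofDual (hN _ (le_max_left N n))
  calc I N ≤ S ⊔ I N := le_sup_right
    _ = S ⊔ I (max N n) := by rw [← Submodule.comap_map_mkQ, hmap, Submodule.comap_map_mkQ]
    _ ≤ I n ⊔ S := sup_comm S (I n) ▸ sup_le_sup_left (hI (le_max_right N n)) S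

theorem ZAdicComplete.exists_forall_mem_sup_span_pow (hcomp : ZAdicComplete A z)
    {E : ℕ → Ideal A} (hE : ∀ k, E k ≤ E (k + 1) ⊔ Ideal.span {z ^ (k + 1)}) {a : A}
    (ha : a ∈ E 0) : ∃ L, L - a ∈ Ideal.span {z} ∧ ∀ k, L ∈ E k ⊔ Ideal.span {z ^ k} := by
  have hstep : ∀ k x, ∃ y, x ∈ E k → y ∈ E (k + 1) ∧ y - x ∈ Ideal.span {z ^ (k + 1)} := by
    intro k x
    by_cases hx : x ∈ E k
    · obtain ⟨y, hy, r, hr, rfl⟩ := Submodule.mem_sup.mp (hE k hx)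
      exact ⟨y, fun _ => ⟨hy, by rw [sub_add_cancel_left]; exact neg_mem hr⟩⟩
    · exact ⟨0, fun h => absurd h hx⟩
  choose next hnext using hstep
  let x : ℕ → A := fun k => Nat.rec (motive := fun _ => A) a next k
  have hxE : ∀ k, x k ∈ E k := fun k => by
    induction k with
    | zero => exact ha
    | succ k ih => exact (hnext k _ ih).1
  obtain ⟨L, hL⟩ := hcomp.exists_forall_sub_mem (f := x) fun k => (hnext k _ (hxE k)).2
  refine ⟨L, by rw [← pow_one z]; exact hL 0, fun k => ?_⟩
  rw [← sub_add_cancel L (x k)]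
  exact add_mem (Submodule.mem_sup_right (span_pow_antitone k.le_succ (hL k)))
    (Submodule.mem_sup_left (hxE k))

end

theorem descending_chain_has_nonzero_intersection_general
    (A : Type*) [Ring A] [IsNoetherianRing A]
    (z : A)
    (hzJ : z ∈ (⊥ : Ideal A).jacobson)
    (hreg₁ : ∀ a : A, z * a = 0 → a = 0)
    (hnorm₁ : ∀ a : A, ∃ b : A, z * a = b * z)
    (hnorm₂ : ∀ a : A, ∃ b : A, a * z = z * b)
    (hart : IsArtinian A (A ⧸ (Ideal.span {z} : Ideal A)))
    (hcomp : ZAdicComplete A z)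
    (I : ℕ → Ideal A)
    (hdesc : ∀ n : ℕ, I (n + 1) ≤ I n)
    (hnot : ∀ n : ℕ, ¬ I n ≤ Ideal.span {z}) :
    ∃ x : A, x ≠ 0 ∧ ∀ n : ℕ, x ∈ I n := by
  have hI : Antitone I := antitone_nat_of_succ_le hdesc
  choose N hN using fun k =>
    have := isArtinian_quotient_span_pow hart k
    exists_forall_le_sup_of_isArtinian_quotient (S := Ideal.span {z ^ k}) hI
  obtain ⟨a, haI, haz⟩ := SetLike.not_le_iff_exists.mp (hnot (N 1))
  obtain ⟨L, hLa, hL⟩ := hcomp.exists_forall_mem_sup_span_pow (E := fun k => I (N (k + 1)))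
    (fun k => hN (k + 1) (N (k + 2))) haI
  refine ⟨L, ?_, fun n => mem_of_forall_mem_sup_span_pow hzJ hreg₁ hnorm₁ hnorm₂ hcomp fun k => ?_⟩
  · rintro rfl
    exact haz (by simpa using hLa)
  · exact sup_le ((hN (k + 1) n).trans (sup_le_sup_left (span_pow_antitone k.le_succ) _))
      le_sup_right (hL k)

theorem descending_chain_has_nonzero_intersection
    (A : Type*) [Ring A] [IsNoetherianRing A]
    (z : A)
    (hzJ : z ∈ (⊥ : Ideal A).jacobson)
    (hreg₁ : ∀ a : A, z * a = 0 → a = 0) (hreg₂ : ∀ a : A, a * z = 0 → a = 0)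
    (hnorm₁ : ∀ a : A, ∃ b : A, z * a = b * z)
    (hnorm₂ : ∀ a : A, ∃ b : A, a * z = z * b)
    (hart : IsArtinian A (A ⧸ (Ideal.span {z} : Ideal A)))
    (hcomp : ZAdicComplete A z)
    (I : ℕ → Ideal A)
    (hdesc : ∀ n : ℕ, I (n + 1) ≤ I n)
    (hnot : ∀ n : ℕ, ¬ I n ≤ Ideal.span {z}) :
    ∃ x : A, x ≠ 0 ∧ ∀ n : ℕ, x ∈ I n :=
  descending_chain_has_nonzero_intersection_general A z hzJ hreg₁ hnorm₁ hnorm₂ hart hcomp I hdesc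
    hnot
end

section
/- Let $G$ be a $p$-saturated group with $p$-valuation $\omega$, and let $\varphi$ be an automorphism of $G$ with $\deg_\omega(\varphi) := \inf_{g \in G}(\omega(\varphi(g)g^{-1}) - \omega(g)) > 1/(p-1)$, such that $\varphi(g)g^{-1}$ lies in the centre $Z$ of $G$ for all $g$. Then the map $z(\varphi) : G \to G$ defined by $z(\varphi)(g) = \lim_{r \to \infty}(\varphi^{p^r}(g)g^{-1})^{p^{-r}}$ is a well-defined group homomorphism from $G$ to $Z$. -/
/-!
Because `φ` moves every element by a central element, `φ` acts on the abelian group `Z` as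
`1 + δ` with `δ g = φ g * g⁻¹`, and `φ ^ n g * g⁻¹ = ∏ₖ (δ^[k + 1] g) ^ (n choose (k + 1))`.
For `n = p` every factor but the last has exponent divisible by `p`, which raises values by `1`,
and the last one has value at least `ω (δ g) + (p - 1) deg φ > ω (δ g) + 1`. Hence
`deg (φ ^ p ^ r) ≥ deg φ + r`, saturation provides `p ^ r`-th roots `b r` of
`φ ^ p ^ r g * g⁻¹`, and `ω (b (r + 1) * (b r)⁻¹)` grows linearly in `r`, so the roots converge.

The roots are central, hence unique (`G` is torsion-free) and multiplicative in `g`, because in a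
`p`-valued group `y ^ p ∈ Z` forces `y ∈ Z`. For this, the same binomial expansion of
`⁅y ^ p, x⁆ = 1`, carried out modulo the elements of value `≥ 2 ω ⁅y, x⁆` (where the elements of
value `≥ ω ⁅y, x⁆` commute), gives `ω (⁅y, x⁆ ^ p) > ω ⁅y, x⁆ + 1` whenever `ω ⁅y, x⁆ > 1`, which
is absurd; a descending induction on `ω ⁅y, x⁆` handles the remaining values.
-/

open Finset
open scoped commutatorElement

section Binomial

variable {A : Type*} [CommGroup A] (f : A →* A) {T Q : ℕ → A}

theorem eq_prod_pow_choose (hT : ∀ j, f (T j) = T (j + 1) * T j) (hQ0 : Q 0 = 1)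
    (hQ : ∀ n, Q (n + 1) = f (Q n) * T 0) (n : ℕ) :
    Q n = ∏ j ∈ range n, T j ^ n.choose (j + 1) := by
  induction n with
  | zero => simp [hQ0]
  | succ n ih =>
    have hshift : ∏ j ∈ range (n + 1), T j ^ n.choose j
        = (∏ j ∈ range n, T (j + 1) ^ n.choose (j + 1)) * T 0 := by
      simp [prod_range_succ']
    have hextend : ∏ j ∈ range n, T j ^ n.choose (j + 1)
        = ∏ j ∈ range (n + 1), T j ^ n.choose (j + 1) := by
      simp [prod_range_succ]
    simp only [Nat.choose_succ_succ, pow_add, prod_mul_distrib, hshift]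
    rw [hQ, ih, map_prod]
    simp only [map_pow, hT, mul_pow, prod_mul_distrib, ← hextend]
    ac_rfl

theorem eq_prod_pow_choose_add_two_mul_pow (hT : ∀ j, f (T j) = T (j + 1) * T j)
    (hQ0 : Q 0 = 1) (hQ : ∀ n, Q (n + 1) = f (Q n) * T 0) (n : ℕ) :
    Q n = (∏ j ∈ range n, T (j + 1) ^ n.choose (j + 2)) * T 0 ^ n := by
  have hextend : ∏ j ∈ range n, T j ^ n.choose (j + 1)
      = ∏ j ∈ range (n + 1), T j ^ n.choose (j + 1) := by
    simp [prod_range_succ]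
  rw [eq_prod_pow_choose f hT hQ0 hQ, hextend, prod_range_succ', Nat.choose_one_right]

end Binomial

section GroupTheory

variable {G : Type*} [Group G]

theorem commutatorElement_pow_left_of_commute {y x : G} (h : Commute y ⁅y, x⁆) (n : ℕ) :
    ⁅y ^ n, x⁆ = ⁅y, x⁆ ^ n := by
  induction n with
  | zero => simp
  | succ n ih =>
    rw [pow_succ', commutatorElement_mul_left_eq_conj_mul, ih, (h.pow_right n).eq,
      mul_inv_cancel_right, ← pow_succ]

theorem Subgroup.isMulCommutative_map_mk' (N H : Subgroup G) [N.Normal]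
    (h : ∀ a ∈ H, ∀ b ∈ H, ⁅a, b⁆ ∈ N) : IsMulCommutative (H.map (QuotientGroup.mk' N)) := by
  refine IsMulCommutative.of_setLike_mul_comm ?_
  rintro _ ⟨a, ha, rfl⟩ _ ⟨b, hb, rfl⟩
  rw [← commutatorElement_eq_one_iff_mul_comm, ← map_commutatorElement]
  exact (QuotientGroup.eq_one_iff _).mpr (h a ha b hb)

variable {ψ : MulAut G} (hZ : ∀ g : G, ψ g * g⁻¹ ∈ Subgroup.center G)
include hZ

theorem pow_apply_mul_inv_mem_center (n : ℕ) (x : G) :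
    (ψ ^ n) x * x⁻¹ ∈ Subgroup.center G := by
  induction n with
  | zero => simp
  | succ n ih =>
    have hsplit : (ψ ^ (n + 1)) x * x⁻¹ = ψ ((ψ ^ n) x * x⁻¹) * (ψ x * x⁻¹) := by
      rw [pow_succ', MulAut.mul_apply, map_mul, map_inv]; group
    rw [hsplit]
    exact mul_mem (MulEquivClass.apply_mem_center ψ ih) (hZ x)

theorem apply_mul_mul_inv (g h : G) : ψ (g * h) * (g * h)⁻¹ = (ψ g * g⁻¹) * (ψ h * h⁻¹) := by
  have hcomm := Subgroup.mem_center_iff.mp (hZ h) g⁻¹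
  calc ψ (g * h) * (g * h)⁻¹ = ψ g * ((ψ h * h⁻¹) * g⁻¹) := by rw [map_mul]; group
    _ = (ψ g * g⁻¹) * (ψ h * h⁻¹) := by rw [← hcomm]; group

theorem mul_pow_eq_apply_mul_mul_inv {a b g h : G} {m : ℕ} (hb : b ∈ Subgroup.center G)
    (ha : a ^ m = ψ g * g⁻¹) (hb' : b ^ m = ψ h * h⁻¹) : (a * b) ^ m = ψ (g * h) * (g * h)⁻¹ := by
  rw [(show Commute a b from Subgroup.mem_center_iff.mp hb a).mul_pow, ha, hb',
    apply_mul_mul_inv hZ]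

end GroupTheory

theorem Nat.Prime.two_le_cast {p : ℕ} (hp : p.Prime) : (2 : ℝ) ≤ p := by
  exact_mod_cast hp.two_le

theorem Nat.Prime.inv_sub_one_pos {p : ℕ} (hp : p.Prime) : (0 : ℝ) < ((p : ℝ) - 1)⁻¹ :=
  inv_pos.mpr (by linarith [hp.two_le_cast])

theorem Nat.Prime.one_lt_sub_one_mul_of_inv_sub_one_lt {p : ℕ} (hp : p.Prime) {t : ℝ}
    (ht : ((p : ℝ) - 1)⁻¹ < t) : 1 < (p - 1) * t := by
  have hp1 : (0 : ℝ) < p - 1 := by linarith [hp.two_le_cast]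
  simpa [hp1.ne'] using mul_lt_mul_of_pos_left ht hp1

theorem WithTop.add_coe_le_of_forall {z w : WithTop ℝ} {c : ℝ}
    (h : ∀ a : ℝ, (a : WithTop ℝ) ≤ z → ((a + c : ℝ) : WithTop ℝ) ≤ w) : z + c ≤ w := by
  refine WithTop.forall_coe_le_iff_le.mp fun b hb => ?_
  have hz : ((b - c : ℝ) : WithTop ℝ) ≤ z := by
    induction z with
    | top => exact le_top
    | coe z =>
      rw [← WithTop.coe_add, WithTop.coe_le_coe] at hb
      exact WithTop.coe_le_coe.mpr (by linarith)
  simpa using h _ hz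

def ValCauchy {G : Type*} [Group G] (ω : G → WithTop ℝ) (c : ℕ → G) : Prop :=
  ∀ C : ℝ, ∃ t : ℕ, ∀ i ≥ t, ∀ j ≥ t, (C : WithTop ℝ) ≤ ω (c i * (c j)⁻¹)

def ValTendsto {G : Type*} [Group G] (ω : G → WithTop ℝ) (c : ℕ → G) (L : G) : Prop :=
  ∀ C : ℝ, ∃ t : ℕ, ∀ i ≥ t, (C : WithTop ℝ) ≤ ω (c i * L⁻¹)

structure IsPValuation {G : Type*} [Group G] (p : ℕ) (ω : G → WithTop ℝ) : Prop where
  min_le_map_mul_inv : ∀ x y : G, min (ω x) (ω y) ≤ ω (x * y⁻¹)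
  add_le_map_commutator : ∀ x y : G, ω x + ω y ≤ ω (x⁻¹ * y⁻¹ * x * y)
  map_eq_top_iff : ∀ x : G, ω x = ⊤ ↔ x = 1
  inv_sub_one_lt : ∀ x : G, ((((p : ℝ) - 1)⁻¹ : ℝ) : WithTop ℝ) < ω x
  map_pow_prime : ∀ x : G, ω (x ^ p) = ω x + 1

namespace IsPValuation

variable {G : Type*} [Group G] {p : ℕ} {ω : G → WithTop ℝ} (hω : IsPValuation p ω)
include hω

theorem map_one : ω 1 = ⊤ := (hω.map_eq_top_iff 1).mpr rfl

theorem exists_coe_eq {x : G} (hx : x ≠ 1) : ∃ v : ℝ, ω x = v := by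
  obtain ⟨v, hv⟩ := WithTop.ne_top_iff_exists.mp (mt (hω.map_eq_top_iff x).mp hx)
  exact ⟨v, hv.symm⟩

theorem map_inv (x : G) : ω x⁻¹ = ω x := by
  have hle : ∀ z : G, ω z ≤ ω z⁻¹ := fun z => by
    simpa [hω.map_one] using hω.min_le_map_mul_inv 1 z
  exact le_antisymm (by simpa using hle x⁻¹) (hle x)

theorem le_map_mul {a : WithTop ℝ} {x y : G} (hx : a ≤ ω x) (hy : a ≤ ω y) : a ≤ ω (x * y) := by
  simpa [hω.map_inv] using (le_min hx (hy.trans_eq (hω.map_inv y).symm)).trans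
    (hω.min_le_map_mul_inv x y⁻¹)

theorem add_le_map_commutatorElement (x y : G) : ω x + ω y ≤ ω ⁅x, y⁆ := by
  simpa [hω.map_inv, commutatorElement_def] using hω.add_le_map_commutator x⁻¹ y⁻¹

theorem eq_of_forall_le_map_mul_inv {x y : G} (h : ∀ C : ℝ, (C : WithTop ℝ) ≤ ω (x * y⁻¹)) :
    x = y :=
  mul_inv_eq_one.mp <| (hω.map_eq_top_iff _).mp <| WithTop.eq_top_iff_forall_ge.mpr h

theorem nonneg (hp : p.Prime) (x : G) : ((0 : ℝ) : WithTop ℝ) ≤ ω x :=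
  (WithTop.coe_le_coe.mpr hp.inv_sub_one_pos.le).trans (hω.inv_sub_one_lt x).le

theorem inv_sub_one_lt_of_map_eq {x : G} {t : ℝ} (ht : ω x = t) : ((p : ℝ) - 1)⁻¹ < t := by
  exact_mod_cast ht ▸ hω.inv_sub_one_lt x

theorem le_map_conj (hp : p.Prime) (g x : G) : ω x ≤ ω (g * x * g⁻¹) := by
  have hcomm : ω x ≤ ω ⁅x⁻¹, g⁆ := by
    simpa [hω.map_inv] using (le_add_of_nonneg_right (hω.nonneg hp g)).trans
      (hω.add_le_map_commutatorElement x⁻¹ g)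
  have hconj : g * x * g⁻¹ = x * ⁅x⁻¹, g⁆ := by rw [commutatorElement_def]; group
  exact hconj ▸ hω.le_map_mul le_rfl hcomm

theorem map_pow_prime_pow (x : G) (r : ℕ) : ω (x ^ p ^ r) = ω x + (r : ℝ) := by
  induction r with
  | zero => simp
  | succ r ih =>
    rw [pow_succ, pow_mul, hω.map_pow_prime, ih, add_assoc, ← WithTop.coe_one, ← WithTop.coe_add]
    push_cast
    rfl

theorem le_map_pow (x : G) {n : ℕ} (hn : n ≠ 0) : ω x ≤ ω (x ^ n) := by
  induction n with
  | zero => exact absurd rfl hn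
  | succ n ih =>
    rcases eq_or_ne n 0 with rfl | hn'
    · simp
    · rw [pow_succ]
      exact hω.le_map_mul (ih hn') le_rfl

theorem add_one_le_map_pow_of_dvd (x : G) {n : ℕ} (hdvd : p ∣ n) (hn : n ≠ 0) :
    ω x + 1 ≤ ω (x ^ n) := by
  obtain ⟨m, rfl⟩ := hdvd
  rw [pow_mul, ← hω.map_pow_prime]
  exact hω.le_map_pow _ (right_ne_zero_of_mul hn)

theorem eq_one_of_pow_prime_pow_eq_one {x : G} {r : ℕ} (h : x ^ p ^ r = 1) : x = 1 := by
  have htop : ω x + (r : ℝ) = ⊤ := by rw [← hω.map_pow_prime_pow, h, hω.map_one]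
  exact (hω.map_eq_top_iff x).mp (by simpa using htop)

def filtration (v : ℝ) : Subgroup G where
  carrier := {z | (v : WithTop ℝ) ≤ ω z}
  one_mem' := by simp [hω.map_one]
  mul_mem' := hω.le_map_mul
  inv_mem' := by simp [hω.map_inv]

theorem mem_filtration {v : ℝ} {z : G} : z ∈ hω.filtration v ↔ (v : WithTop ℝ) ≤ ω z := Iff.rfl

theorem filtration_normal (hp : p.Prime) (v : ℝ) : (hω.filtration v).Normal :=
  ⟨fun z hz g => hz.trans (hω.le_map_conj hp g z)⟩

theorem commutatorElement_mem_filtration {s t : ℝ} {x y : G} (hx : x ∈ hω.filtration s)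
    (hy : y ∈ hω.filtration t) : ⁅x, y⁆ ∈ hω.filtration (s + t) := by
  rw [mem_filtration, WithTop.coe_add]
  exact (add_le_add hx hy).trans (hω.add_le_map_commutatorElement x y)

theorem le_map_pow_choose_add_two (hp : p.Prime) {a e : ℝ} (he : 0 ≤ e) {z : G} (j : ℕ)
    (hz : ((a + (j + 1) * e : ℝ) : WithTop ℝ) ≤ ω z) :
    ((a + min (1 + e) ((p - 1) * e) : ℝ) : WithTop ℝ) ≤ ω (z ^ p.choose (j + 2)) := by
  have hje : 0 ≤ (j : ℝ) * e := by positivity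
  rcases lt_trichotomy (j + 2) p with hlt | heq | hgt
  · refine le_trans ?_ (hω.add_one_le_map_pow_of_dvd z (hp.dvd_choose_self (by omega) hlt)
      (Nat.choose_pos hlt.le).ne')
    refine le_trans ?_ (add_le_add_left hz 1)
    rw [← WithTop.coe_one, ← WithTop.coe_add, WithTop.coe_le_coe]
    nlinarith [min_le_left (1 + e) ((p - 1) * e)]
  · subst heq
    rw [Nat.choose_self, pow_one]
    refine le_trans (WithTop.coe_le_coe.mpr ?_) hz
    push_cast
    nlinarith [min_le_right (1 + e) (((j : ℝ) + 2 - 1) * e)]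
  · simp [Nat.choose_eq_zero_of_lt hgt, hω.map_one]

theorem filtration_anti {s s' : ℝ} (h : s ≤ s') : hω.filtration s' ≤ hω.filtration s :=
  fun _ hz => (WithTop.coe_le_coe.mpr h).trans hz

theorem iterate_commutatorElement_mem_filtration {y u : G} {t v : ℝ}
    (hy : (t : WithTop ℝ) ≤ ω y) (hu : u ∈ hω.filtration v) (m : ℕ) :
    (⁅y, ·⁆)^[m] u ∈ hω.filtration (v + m * t) := by
  induction m with
  | zero => simpa using hu
  | succ m ih =>
    rw [Function.iterate_succ_apply']
    convert hω.commutatorElement_mem_filtration hy ih using 2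
    push_cast; ring

theorem commutatorElement_pow_left_mem_filtration (hp : p.Prime) {y x : G} {v : ℝ}
    (h : ⁅y, x⁆ ∈ hω.filtration v) (n : ℕ) : ⁅y ^ n, x⁆ ∈ hω.filtration v := by
  induction n with
  | zero => simp
  | succ n ih =>
    rw [pow_succ', commutatorElement_mul_left_eq_conj_mul]
    exact mul_mem ((hω.filtration_normal hp v).conj_mem _ ih y) h

open scoped IsMulCommutative in
/-- A congruence of Hall–Petresco type: modulo `filtration (2 * v)` the subgroup `filtration v`
becomes abelian and conjugation by `y` acts on it as `1 + ⁅y, ·⁆`, so expanding `⁅y ^ p, x⁆ = 1`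
binomially shows that `⁅y, x⁆ ^ p` is congruent to an element of higher value. -/
theorem exists_mul_pow_commutatorElement_mem_filtration (hp : p.Prime) {y : G}
    (hy : y ^ p ∈ Subgroup.center G) (x : G) {v t : ℝ} (ht : 0 ≤ t) (hyt : (t : WithTop ℝ) ≤ ω y)
    (hv : ⁅y, x⁆ ∈ hω.filtration v) :
    ∃ z ∈ hω.filtration (v + min (1 + t) ((p - 1) * t)),
      z * ⁅y, x⁆ ^ p ∈ hω.filtration (2 * v) := by
  have := hω.filtration_normal hp (2 * v)
  set π := QuotientGroup.mk' (hω.filtration (2 * v))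
  set A := (hω.filtration v).map π
  have : IsMulCommutative A := Subgroup.isMulCommutative_map_mk' _ _ fun a ha b hb => by
    simpa [two_mul] using hω.commutatorElement_mem_filtration ha hb
  have hAnormal : A.Normal := (hω.filtration_normal hp v).map π (QuotientGroup.mk'_surjective _)
  let f : A →* A := ((MulAut.conj (π y)).toMonoidHom.comp A.subtype).codRestrict A
    fun a => hAnormal.conj_mem _ a.2 _
  set U : ℕ → G := fun m => (⁅y, ·⁆)^[m] ⁅y, x⁆
  have hUsucc : ∀ m, U (m + 1) = ⁅y, U m⁆ := fun m => Function.iterate_succ_apply' _ _ _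
  have hUval := hω.iterate_commutatorElement_mem_filtration hyt hv
  have hUmem : ∀ m, U m ∈ hω.filtration v := fun m =>
    hω.filtration_anti (le_add_of_nonneg_right (by positivity)) (hUval m)
  let T : ℕ → A := fun m => ⟨π (U m), Subgroup.mem_map_of_mem π (hUmem m)⟩
  let Q : ℕ → A := fun n => ⟨π ⁅y ^ n, x⁆,
    Subgroup.mem_map_of_mem π (hω.commutatorElement_pow_left_mem_filtration hp hv n)⟩
  have hexp := eq_prod_pow_choose_add_two_mul_pow f (T := T) (Q := Q)
    (fun j => Subtype.ext <| by
      change π y * π (U j) * (π y)⁻¹ = π (U (j + 1)) * π (U j)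
      rw [← _root_.map_inv π, ← map_mul π, ← map_mul π, ← map_mul π, hUsucc, commutatorElement_def]
      congr 1; group)
    (Subtype.ext <| by simp [Q])
    (fun n => Subtype.ext <| by
      change π ⁅y ^ (n + 1), x⁆ = π y * π ⁅y ^ n, x⁆ * (π y)⁻¹ * π ⁅y, x⁆
      rw [pow_succ', commutatorElement_mul_left_eq_conj_mul]; simp only [map_mul, _root_.map_inv])
    p
  have hQp : Q p = 1 := Subtype.ext <| by
    simp [Q, commutatorElement_eq_one_iff_commute.mpr (Subgroup.mem_center_iff.mp hy x).symm]
  have htail : ∏ j ∈ range p, T (j + 1) ^ p.choose (j + 2)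
      ∈ ((hω.filtration (v + min (1 + t) ((p - 1) * t))).map π).subgroupOf A := by
    refine Subgroup.prod_mem _ fun j _ => Subgroup.mem_subgroupOf.mpr ?_
    have hj : ((v + ((j + 1 : ℕ) : ℝ) * t : ℝ) : WithTop ℝ) ≤ ω (U (j + 1)) := hUval (j + 1)
    push_cast at hj
    exact ⟨U (j + 1) ^ p.choose (j + 2), hω.le_map_pow_choose_add_two hp ht j hj, rfl⟩
  obtain ⟨z, hz, hπz⟩ := Subgroup.mem_subgroupOf.mp htail
  refine ⟨z, hz, (QuotientGroup.eq_one_iff _).mp ?_⟩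
  change π (z * ⁅y, x⁆ ^ p) = 1
  rw [map_mul, _root_.map_pow, hπz]
  have h := congrArg Subtype.val (hexp.symm.trans hQp)
  simp only [Subgroup.coe_mul, SubgroupClass.coe_pow, OneMemClass.coe_one] at h
  exact h

theorem commutatorElement_eq_one_of_one_lt (hp : p.Prime) {y : G} (hy : y ^ p ∈ Subgroup.center G)
    (x : G) (h1 : ((1 : ℝ) : WithTop ℝ) < ω ⁅y, x⁆) : ⁅y, x⁆ = 1 := by
  by_contra hne
  obtain ⟨v, hv⟩ := hω.exists_coe_eq hne
  obtain ⟨t, ht⟩ := hω.exists_coe_eq fun hy1 : y = 1 => hne (by simp [hy1])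
  have hv1 : 1 < v := by exact_mod_cast hv ▸ h1
  have hpt := hp.one_lt_sub_one_mul_of_inv_sub_one_lt (hω.inv_sub_one_lt_of_map_eq ht)
  have ht0 := hp.inv_sub_one_pos.trans (hω.inv_sub_one_lt_of_map_eq ht)
  obtain ⟨z, hz, hzu⟩ := hω.exists_mul_pow_commutatorElement_mem_filtration hp hy x ht0.le
    ht.ge hv.ge
  have hupper : ω (⁅y, x⁆ ^ p) = ((v + 1 : ℝ) : WithTop ℝ) := by
    rw [hω.map_pow_prime, hv, WithTop.coe_add, WithTop.coe_one]
  have hlower : ((min (v + min (1 + t) ((p - 1) * t)) (2 * v) : ℝ) : WithTop ℝ)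
      ≤ ω (⁅y, x⁆ ^ p) := by
    have hsplit : ⁅y, x⁆ ^ p = z⁻¹ * (z * ⁅y, x⁆ ^ p) := by group
    rw [hsplit]
    exact hω.le_map_mul ((WithTop.coe_le_coe.mpr (min_le_left _ _)).trans (inv_mem hz))
      ((WithTop.coe_le_coe.mpr (min_le_right _ _)).trans hzu)
  rw [hupper, WithTop.coe_le_coe] at hlower
  have hmin : v + 1 < v + min (1 + t) ((p - 1) * t) := by
    linarith [lt_min (by linarith : 1 < 1 + t) hpt]
  exact not_le.mpr (lt_min hmin (by linarith)) hlower

theorem mem_center_of_pow_mem_center (hp : p.Prime) {y : G} (hy : y ^ p ∈ Subgroup.center G) :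
    y ∈ Subgroup.center G := by
  rcases eq_or_ne y 1 with rfl | hy1
  · exact one_mem _
  obtain ⟨t, ht⟩ := hω.exists_coe_eq hy1
  have ht0 := hp.inv_sub_one_pos.trans (hω.inv_sub_one_lt_of_map_eq ht)
  -- Descending induction on the value: once `y` commutes with `⁅y, x⁆`, the latter is killed by
  -- `p`, hence trivial since `G` is torsion-free.
  have hdesc : ∀ n : ℕ, ∀ x : G, ((1 - n * t : ℝ) : WithTop ℝ) < ω ⁅y, x⁆ → ⁅y, x⁆ = 1 := by
    intro n
    induction n with
    | zero => exact fun x hx => hω.commutatorElement_eq_one_of_one_lt hp hy x (by simpa using hx)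
    | succ n ih =>
      intro x hx
      have hval : ((1 - n * t : ℝ) : WithTop ℝ) < ω ⁅y, ⁅y, x⁆⁆ := by
        refine lt_of_lt_of_le ?_ (hω.add_le_map_commutatorElement y _)
        rw [ht, show (1 - n * t : ℝ) = t + (1 - (n + 1 : ℕ) * t) by push_cast; ring,
          WithTop.coe_add]
        exact WithTop.add_lt_add_left WithTop.coe_ne_top hx
      have hcomm := commutatorElement_eq_one_iff_commute.mp (ih _ hval)
      refine hω.eq_one_of_pow_prime_pow_eq_one (r := 1) ?_
      rw [pow_one, ← commutatorElement_pow_left_of_commute hcomm,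
        commutatorElement_eq_one_iff_commute]
      exact (Subgroup.mem_center_iff.mp hy x).symm
  obtain ⟨n, hn⟩ : ∃ n : ℕ, 1 - n * t < ((p : ℝ) - 1)⁻¹ := by
    obtain ⟨n, hn⟩ := exists_nat_gt ((1 - ((p : ℝ) - 1)⁻¹) / t)
    exact ⟨n, by rw [div_lt_iff₀ ht0] at hn; linarith⟩
  refine Subgroup.mem_center_iff.mpr fun x => ?_
  exact (commutatorElement_eq_one_iff_commute.mp
    (hdesc n x ((WithTop.coe_lt_coe.mpr hn).trans (hω.inv_sub_one_lt _)))).symm.eq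

theorem mem_center_of_pow_prime_pow_mem_center (hp : p.Prime) {y : G} {r : ℕ}
    (hy : y ^ p ^ r ∈ Subgroup.center G) : y ∈ Subgroup.center G := by
  induction r generalizing y with
  | zero => simpa using hy
  | succ r ih =>
    refine hω.mem_center_of_pow_mem_center hp (ih ?_)
    rwa [← pow_mul, ← pow_succ']

theorem eq_of_pow_prime_pow_eq {a b : G} (ha : a ∈ Subgroup.center G) {r : ℕ}
    (hab : a ^ p ^ r = b ^ p ^ r) : a = b := by
  have hcomm : Commute a b⁻¹ := (Subgroup.mem_center_iff.mp ha b⁻¹).symm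
  refine mul_inv_eq_one.mp (hω.eq_one_of_pow_prime_pow_eq_one (r := r) ?_)
  rw [hcomm.mul_pow, hab, inv_pow, mul_inv_cancel]

theorem exists_pow_prime_pow_eq
    (hsat : ∀ x : G, (((((p : ℝ) - 1)⁻¹ + 1 : ℝ)) : WithTop ℝ) < ω x → ∃ y : G, y ^ p = x)
    (r : ℕ) {x : G} (hx : ((((p : ℝ) - 1)⁻¹ + r : ℝ) : WithTop ℝ) < ω x) :
    ∃ y : G, y ^ p ^ r = x := by
  induction r generalizing x with
  | zero => exact ⟨x, by simp⟩
  | succ r ih =>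
    obtain ⟨y, rfl⟩ := hsat x (lt_of_le_of_lt (WithTop.coe_le_coe.mpr (by
      push_cast; linarith [(r.cast_nonneg : (0 : ℝ) ≤ r)])) hx)
    have hy : ((((p : ℝ) - 1)⁻¹ + r : ℝ) : WithTop ℝ) < ω y := by
      rw [hω.map_pow_prime, show ((p : ℝ) - 1)⁻¹ + (r + 1 : ℕ) = ((p : ℝ) - 1)⁻¹ + r + 1 by
        push_cast; ring, WithTop.coe_add, WithTop.coe_one] at hx
      exact (WithTop.add_lt_add_iff_right WithTop.one_ne_top).mp hx
    obtain ⟨z, rfl⟩ := ih hy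
    exact ⟨z, by rw [← pow_mul, ← pow_succ]⟩

open scoped IsMulCommutative in
theorem add_min_le_map_pow_prime_apply_mul_inv_mul_inv_pow (hp : p.Prime) {ψ : MulAut G}
    (hZ : ∀ g : G, ψ g * g⁻¹ ∈ Subgroup.center G) {e : ℝ} (he : 0 ≤ e)
    (hdeg : ∀ g : G, ω g + e ≤ ω (ψ g * g⁻¹)) (x : G) :
    ω (ψ x * x⁻¹) + (min (1 + e) ((p - 1) * e) : ℝ)
      ≤ ω ((ψ ^ p) x * x⁻¹ * ((ψ x * x⁻¹) ^ p)⁻¹) := by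
  refine WithTop.add_coe_le_of_forall fun a ha => ?_
  let f : Subgroup.center G →* Subgroup.center G :=
    ((ψ : G →* G).comp (Subgroup.center G).subtype).codRestrict _
      fun z => MulEquivClass.apply_mem_center ψ z.2
  set D : G → G := fun z => ψ z * z⁻¹
  let T : ℕ → Subgroup.center G := fun j =>
    ⟨D^[j + 1] x, by rw [Function.iterate_succ_apply']; exact hZ _⟩
  let Q : ℕ → Subgroup.center G := fun n => ⟨(ψ ^ n) x * x⁻¹, pow_apply_mul_inv_mem_center hZ n x⟩
  have hTsucc : ∀ j, (T (j + 1) : G) = D (T j) := fun j => Function.iterate_succ_apply' D _ x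
  have hexp := eq_prod_pow_choose_add_two_mul_pow f (T := T) (Q := Q)
    (fun j => Subtype.ext <| by
      change ψ (T j : G) = T (j + 1) * T j
      rw [hTsucc]; exact (inv_mul_cancel_right _ _).symm)
    (Subtype.ext <| by simp [Q])
    (fun n => Subtype.ext <| by
      change (ψ ^ (n + 1)) x * x⁻¹ = ψ ((ψ ^ n) x * x⁻¹) * (ψ x * x⁻¹)
      rw [pow_succ', MulAut.mul_apply, map_mul, _root_.map_inv]; group) p
  have hTval : ∀ m : ℕ, ((a + m * e : ℝ) : WithTop ℝ) ≤ ω (T m) := by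
    intro m
    induction m with
    | zero => simpa [T, D] using ha
    | succ m ih =>
      rw [hTsucc]
      refine le_trans (le_trans ?_ (add_le_add_left ih _)) (hdeg _)
      rw [← WithTop.coe_add]
      exact WithTop.coe_le_coe.mpr (by push_cast; linarith)
  have htail : ∏ j ∈ range p, T (j + 1) ^ p.choose (j + 2)
      ∈ (hω.filtration (a + min (1 + e) ((p - 1) * e))).subgroupOf (Subgroup.center G) := by
    refine Subgroup.prod_mem _ fun j _ => Subgroup.mem_subgroupOf.mpr ?_
    exact hω.le_map_pow_choose_add_two hp he j (by simpa using hTval (j + 1))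
  have h := congrArg Subtype.val hexp
  simp only [Subgroup.coe_mul, SubgroupClass.coe_pow] at h
  have hmem := Subgroup.mem_subgroupOf.mp htail
  rwa [eq_mul_inv_of_mul_eq h.symm] at hmem

theorem add_one_le_map_pow_prime_apply_mul_inv (hp : p.Prime) {ψ : MulAut G}
    (hZ : ∀ g : G, ψ g * g⁻¹ ∈ Subgroup.center G) {e : ℝ} (he : ((p : ℝ) - 1)⁻¹ < e)
    (hdeg : ∀ g : G, ω g + e ≤ ω (ψ g * g⁻¹)) (x : G) :
    ω (ψ x * x⁻¹) + 1 ≤ ω ((ψ ^ p) x * x⁻¹) := by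
  have hmin : (1 : ℝ) ≤ min (1 + e) ((p - 1) * e) :=
    le_min (by linarith [hp.inv_sub_one_pos]) (hp.one_lt_sub_one_mul_of_inv_sub_one_lt he).le
  have hsplit : (ψ ^ p) x * x⁻¹
      = ((ψ ^ p) x * x⁻¹ * ((ψ x * x⁻¹) ^ p)⁻¹) * (ψ x * x⁻¹) ^ p := by group
  rw [hsplit]
  refine hω.le_map_mul ?_ (hω.map_pow_prime _).ge
  refine le_trans ?_ (hω.add_min_le_map_pow_prime_apply_mul_inv_mul_inv_pow hp hZ
    (hp.inv_sub_one_pos.trans he).le hdeg x)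
  rw [← WithTop.coe_one]
  exact add_le_add_right (WithTop.coe_le_coe.mpr hmin) _

theorem add_le_map_pow_prime_pow_apply_mul_inv (hp : p.Prime) {φ : MulAut G}
    (hZ : ∀ g : G, φ g * g⁻¹ ∈ Subgroup.center G) {d : ℝ} (hd : ((p : ℝ) - 1)⁻¹ < d)
    (hdeg : ∀ g : G, ω g + d ≤ ω (φ g * g⁻¹)) (r : ℕ) (g : G) :
    ω g + (d + r : ℝ) ≤ ω ((φ ^ p ^ r) g * g⁻¹) := by
  induction r generalizing g with
  | zero => simpa using hdeg g
  | succ r ih =>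
    have hpow : φ ^ p ^ (r + 1) = (φ ^ p ^ r) ^ p := by rw [pow_succ, pow_mul]
    rw [hpow, show d + ((r + 1 : ℕ) : ℝ) = (d + r) + 1 by push_cast; ring, WithTop.coe_add,
      WithTop.coe_one, ← add_assoc]
    exact (add_le_add_left (ih g) 1).trans (hω.add_one_le_map_pow_prime_apply_mul_inv hp
      (pow_apply_mul_inv_mem_center hZ _) (by linarith [(r.cast_nonneg : (0 : ℝ) ≤ r)]) ih g)

theorem mem_center_of_pow_prime_pow_eq_apply_mul_inv (hp : p.Prime) {φ : MulAut G}
    (hZ : ∀ g : G, φ g * g⁻¹ ∈ Subgroup.center G) {g y : G} {r : ℕ}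
    (hy : y ^ p ^ r = (φ ^ p ^ r) g * g⁻¹) : y ∈ Subgroup.center G :=
  hω.mem_center_of_pow_prime_pow_mem_center hp (hy ▸ pow_apply_mul_inv_mem_center hZ _ g)

theorem le_map_succ_mul_inv_of_pow_prime_pow_eq (hp : p.Prime) {φ : MulAut G}
    (hZ : ∀ g : G, φ g * g⁻¹ ∈ Subgroup.center G) {d : ℝ} (hd : ((p : ℝ) - 1)⁻¹ < d)
    (hdeg : ∀ g : G, ω g + d ≤ ω (φ g * g⁻¹)) {g : G} {b : ℕ → G}
    (hb : ∀ r, b r ^ p ^ r = (φ ^ p ^ r) g * g⁻¹) (r : ℕ) :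
    (((r : ℝ) + (2 * d - 1) : ℝ) : WithTop ℝ) ≤ ω (b (r + 1) * (b r)⁻¹) := by
  have hbc : ∀ r, b r ∈ Subgroup.center G := fun r =>
    hω.mem_center_of_pow_prime_pow_eq_apply_mul_inv hp hZ (hb r)
  have hpow : (b (r + 1) * (b r)⁻¹) ^ p ^ (r + 1)
      = ((φ ^ p ^ r) ^ p) g * g⁻¹ * (((φ ^ p ^ r) g * g⁻¹) ^ p)⁻¹ := by
    have hcomm : Commute (b (r + 1)) (b r)⁻¹ :=
      (show Commute (b (r + 1)) (b r) from Subgroup.mem_center_iff.mp (hbc r) _).inv_right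
    rw [hcomm.mul_pow, inv_pow, pow_succ p r, pow_mul (b r), hb r, ← pow_succ, hb (r + 1),
      pow_succ p r, pow_mul φ]
  have hdegψ := hω.add_le_map_pow_prime_pow_apply_mul_inv hp hZ hd hdeg r
  have he : (0 : ℝ) ≤ d + r := by linarith [hp.inv_sub_one_pos, (r.cast_nonneg : (0 : ℝ) ≤ r)]
  have hkey := hω.add_min_le_map_pow_prime_apply_mul_inv_mul_inv_pow hp
    (pow_apply_mul_inv_mem_center hZ _) he hdegψ g
  rw [← hpow, hω.map_pow_prime_pow] at hkey
  have hmin : d + r ≤ min (1 + (d + r)) ((p - 1) * (d + r)) :=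
    le_min (by linarith) (le_mul_of_one_le_left he (by linarith [hp.two_le_cast]))
  have hlower : ((d + r : ℝ) : WithTop ℝ) ≤ ω ((φ ^ p ^ r) g * g⁻¹) :=
    le_trans (by simpa using add_le_add_left (hω.nonneg hp g) ((d + r : ℝ) : WithTop ℝ))
      (hdegψ g)
  rw [← WithTop.add_le_add_iff_right (WithTop.coe_ne_top (a := ((r + 1 : ℕ) : ℝ))),
    ← WithTop.coe_add]
  calc ((r + (2 * d - 1) + (r + 1 : ℕ) : ℝ) : WithTop ℝ)
      = ((d + r : ℝ) : WithTop ℝ) + ((d + r : ℝ) : WithTop ℝ) := by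
        rw [← WithTop.coe_add, WithTop.coe_inj]; push_cast; ring
    _ ≤ ω ((φ ^ p ^ r) g * g⁻¹) + (min (1 + (d + r)) ((p - 1) * (d + r)) : ℝ) :=
        add_le_add hlower (WithTop.coe_le_coe.mpr hmin)
    _ ≤ _ := hkey

theorem exists_pow_prime_pow_eq_apply_mul_inv (hp : p.Prime)
    (hsat : ∀ x : G, (((((p : ℝ) - 1)⁻¹ + 1 : ℝ)) : WithTop ℝ) < ω x → ∃ y : G, y ^ p = x)
    {φ : MulAut G} (hZ : ∀ g : G, φ g * g⁻¹ ∈ Subgroup.center G) {d : ℝ}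
    (hd : ((p : ℝ) - 1)⁻¹ < d) (hdeg : ∀ g : G, ω g + d ≤ ω (φ g * g⁻¹)) (g : G) (r : ℕ) :
    ∃ y : G, y ^ p ^ r = (φ ^ p ^ r) g * g⁻¹ := by
  refine hω.exists_pow_prime_pow_eq hsat r (lt_of_lt_of_le (WithTop.coe_lt_coe.mpr
    (by linarith : ((p : ℝ) - 1)⁻¹ + r < d + r)) ?_)
  exact le_trans (by simpa using add_le_add_left (hω.nonneg hp g) ((d + r : ℝ) : WithTop ℝ))
    (hω.add_le_map_pow_prime_pow_apply_mul_inv hp hZ hd hdeg r g)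

theorem valCauchy_of_le_map_succ_mul_inv {c : ℕ → G} {a : ℝ}
    (h : ∀ r : ℕ, (((r : ℝ) + a : ℝ) : WithTop ℝ) ≤ ω (c (r + 1) * (c r)⁻¹)) : ValCauchy ω c := by
  have hle : ∀ i j : ℕ, i ≤ j → (((i : ℝ) + a : ℝ) : WithTop ℝ) ≤ ω (c j * (c i)⁻¹) := by
    intro i j hij
    induction j, hij using Nat.le_induction with
    | base => simp [hω.map_one]
    | succ j hij ih =>
      have hsplit : c (j + 1) * (c i)⁻¹ = (c (j + 1) * (c j)⁻¹) * (c j * (c i)⁻¹) := by group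
      rw [hsplit]
      refine hω.le_map_mul ((WithTop.coe_le_coe.mpr ?_).trans (h j)) ih
      linarith [(Nat.cast_le (α := ℝ)).mpr hij]
  intro C
  obtain ⟨t, ht⟩ := exists_nat_gt (C - a)
  refine ⟨t, fun i hi j hj => ?_⟩
  have hbound : ∀ k ≥ t, (C : WithTop ℝ) ≤ ((k : ℝ) + a : ℝ) := fun k hk =>
    WithTop.coe_le_coe.mpr (by linarith [(Nat.cast_le (α := ℝ)).mpr hk])
  rcases le_total i j with hij | hji
  · rw [← hω.map_inv, mul_inv_rev, inv_inv]
    exact (hbound i hi).trans (hle i j hij)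
  · exact (hbound j hj).trans (hle j i hji)

theorem eq_of_valTendsto {c : ℕ → G} {L L' : G} (h : ValTendsto ω c L) (h' : ValTendsto ω c L') :
    L = L' := by
  refine hω.eq_of_forall_le_map_mul_inv fun C => ?_
  obtain ⟨t, ht⟩ := h C
  obtain ⟨t', ht'⟩ := h' C
  have hsplit : L * L'⁻¹ = (c (max t t') * L⁻¹)⁻¹ * (c (max t t') * L'⁻¹) := by group
  rw [hsplit]
  exact hω.le_map_mul ((ht _ (le_max_left t t')).trans_eq (hω.map_inv _).symm)
    (ht' _ (le_max_right t t'))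

theorem mem_center_of_valTendsto (hp : p.Prime) {c : ℕ → G} {L : G}
    (hc : ∀ i, c i ∈ Subgroup.center G) (hL : ValTendsto ω c L) : L ∈ Subgroup.center G := by
  refine Subgroup.mem_center_iff.mpr fun g => ?_
  have hconj : ValTendsto ω c (g * L * g⁻¹) := fun C => by
    obtain ⟨t, ht⟩ := hL C
    refine ⟨t, fun i hi => ?_⟩
    have hcg := Subgroup.mem_center_iff.mp (hc i) g
    have hrw : c i * (g * L * g⁻¹)⁻¹ = g * (c i * L⁻¹) * g⁻¹ := by
      calc c i * (g * L * g⁻¹)⁻¹ = c i * g * L⁻¹ * g⁻¹ := by group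
        _ = g * c i * L⁻¹ * g⁻¹ := by rw [hcg]
        _ = g * (c i * L⁻¹) * g⁻¹ := by group
    exact hrw ▸ (ht i hi).trans (hω.le_map_conj hp g _)
  have := hω.eq_of_valTendsto hL hconj
  calc g * L = g * L * g⁻¹ * g := by group
    _ = L * g := by rw [← this]

theorem valTendsto_mul {c c' : ℕ → G} {L L' : G} (h : ValTendsto ω c L) (h' : ValTendsto ω c' L')
    (hL : L ∈ Subgroup.center G) : ValTendsto ω (c * c') (L * L') := fun C => by
  obtain ⟨t, ht⟩ := h C
  obtain ⟨t', ht'⟩ := h' C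
  refine ⟨max t t', fun i hi => ?_⟩
  have hcomm := Subgroup.mem_center_iff.mp (inv_mem hL) (c' i * L'⁻¹)
  have hrw : (c * c') i * (L * L')⁻¹ = (c i * L⁻¹) * (c' i * L'⁻¹) := by
    calc (c * c') i * (L * L')⁻¹ = c i * ((c' i * L'⁻¹) * L⁻¹) := by simp only [Pi.mul_apply]; group
      _ = (c i * L⁻¹) * (c' i * L'⁻¹) := by rw [hcomm, ← mul_assoc]
  rw [hrw]
  exact hω.le_map_mul (ht i (le_of_max_le_left hi)) (ht' i (le_of_max_le_right hi))

end IsPValuation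

theorem log_of_central_automorphism_is_homomorphism
    (p : ℕ) (hp : p.Prime) (G : Type*) [Group G]
    (ω : G → WithTop ℝ)
    -- `ω` is a `p`-valuation:
    (hquot : ∀ x y : G, min (ω x) (ω y) ≤ ω (x * y⁻¹))
    (hcomm : ∀ x y : G, ω x + ω y ≤ ω (x⁻¹ * y⁻¹ * x * y))
    (htop : ∀ x : G, ω x = ⊤ ↔ x = 1)
    (hgt : ∀ x : G, ((((p : ℝ) - 1)⁻¹ : ℝ) : WithTop ℝ) < ω x)
    (hpow : ∀ x : G, ω (x ^ p) = ω x + 1)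
    -- `G` is complete:
    (hcomplete : ∀ c : ℕ → G,
      (∀ C : ℝ, ∃ t : ℕ, ∀ i ≥ t, ∀ j ≥ t, (C : WithTop ℝ) ≤ ω (c i * (c j)⁻¹)) →
      ∃ L : G, ∀ C : ℝ, ∃ t : ℕ, ∀ i ≥ t, (C : WithTop ℝ) ≤ ω (c i * L⁻¹))
    -- `G` is `p`-saturated:
    (hsat : ∀ x : G, (((((p : ℝ) - 1)⁻¹ + 1 : ℝ)) : WithTop ℝ) < ω x → ∃ y : G, y ^ p = x)
    -- `φ` is an automorphism with `deg_ω(φ) > 1/(p-1)` ...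
    (φ : MulAut G)
    (hdeg : ∃ d : ℝ, (((p : ℝ) - 1)⁻¹ : ℝ) < d ∧
      ∀ g : G, ω g + (d : WithTop ℝ) ≤ ω (φ g * g⁻¹))
    -- ... acting trivially modulo the centre
    (hZ : ∀ g : G, φ g * g⁻¹ ∈ Subgroup.center G) :
    ∃ Z : G →* G,
      -- `z(φ)` takes values in the centre
      (∀ g : G, Z g ∈ Subgroup.center G) ∧
      -- the `p^r`-th roots of `φ^{p^r}(g) g⁻¹` exist ...
      (∀ g : G, ∃ c : ℕ → G, ∀ r : ℕ, (c r) ^ (p ^ r) = (φ ^ (p ^ r)) g * g⁻¹) ∧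
      -- ... and any such sequence of roots converges to `z(φ)(g)`
      (∀ (g : G) (c : ℕ → G),
        (∀ r : ℕ, (c r) ^ (p ^ r) = (φ ^ (p ^ r)) g * g⁻¹) →
        ∀ C : ℝ, ∃ t : ℕ, ∀ r ≥ t, (C : WithTop ℝ) ≤ ω (c r * (Z g)⁻¹)) := by
  obtain ⟨d, hd, hdeg⟩ := hdeg
  have hω : IsPValuation p ω := ⟨hquot, hcomm, htop, hgt, hpow⟩
  have hroot_center {g y : G} {r : ℕ} (hy : y ^ p ^ r = (φ ^ p ^ r) g * g⁻¹) :
      y ∈ Subgroup.center G :=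
    hω.mem_center_of_pow_prime_pow_eq_apply_mul_inv hp hZ hy
  choose b hb using fun g r => hω.exists_pow_prime_pow_eq_apply_mul_inv hp hsat hZ hd hdeg g r
  choose L hL using fun g =>
    hcomplete (b g) (hω.valCauchy_of_le_map_succ_mul_inv
      (hω.le_map_succ_mul_inv_of_pow_prime_pow_eq hp hZ hd hdeg (hb g)))
  have hLc : ∀ g, L g ∈ Subgroup.center G := fun g =>
    hω.mem_center_of_valTendsto hp (fun r => hroot_center (hb g r)) (hL g)
  have hbmul : ∀ g h, b (g * h) = b g * b h := fun g h => funext fun r =>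
    hω.eq_of_pow_prime_pow_eq (hroot_center (hb (g * h) r)) <| (hb (g * h) r).trans
      (mul_pow_eq_apply_mul_mul_inv (pow_apply_mul_inv_mem_center hZ _) (hroot_center (hb h r))
        (hb g r) (hb h r)).symm
  have hLmul : ∀ g h, L (g * h) = L g * L h := fun g h =>
    hω.eq_of_valTendsto (hL (g * h)) (hbmul g h ▸ hω.valTendsto_mul (hL g) (hL h) (hLc g))
  refine ⟨MonoidHom.mk' L hLmul, hLc, fun g => ⟨b g, hb g⟩, fun g c hc => ?_⟩
  have hcb : c = b g := funext fun r =>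
    hω.eq_of_pow_prime_pow_eq (hroot_center (hc r)) ((hc r).trans (hb g r).symm)
  exact hcb ▸ hL g
end

section
/- Let $G$ be a complete $p$-valued group of finite rank with ordered basis $g_1, \ldots, g_d$, $k$ a field of characteristic $p$, and for $\alpha \in \mathbb{N}^d$ let $\partial^{(\alpha)}$ be the unique continuous $k$-linear endomorphism of $kG$ with $\partial^{(\alpha)}(g_1^{\lambda_1}\cdots g_d^{\lambda_d}) = \binom{\lambda_1}{\alpha_1}\cdots\binom{\lambda_d}{\alpha_d} g_1^{\lambda_1}\cdots g_d^{\lambda_d}$ for all $\lambda \in \mathbb{Z}_p^d$. Then, writing $b_i = g_i - 1$ and $\mathbf{b}^\beta = b_1^{\beta_1}\cdots b_d^{\beta_d}$, one has $\partial^{(\alpha)}(\mathbf{b}^\beta) = \binom{\beta}{\alpha} \prod_{i=1}^d (1+b_i)^{\alpha_i} b_i^{\beta_i - \alpha_i}$ for all $\alpha, \beta \in \mathbb{N}^d$ (interpreted as $0$ when $\alpha_i > \beta_i$ for some $i$). -/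
/-!
Each factor `gᵢ ^ γᵢ` of an ordered monomial is the evaluation at `gᵢ` of `X ^ γᵢ`, and on
`R[X]` the operator `X ^ a * hasseDeriv a` scales `X ^ c` by `c.choose a`. Since the ordered
product is multilinear in its factors, `∂^{(α)}` therefore acts on `∏ᵢ fᵢ(gᵢ)` by applying
`X ^ αᵢ * hasseDeriv αᵢ` to each polynomial `fᵢ`. For `fᵢ = (X - 1) ^ βᵢ` this is computed by
translating to `X ^ βᵢ`, because Hasse derivatives commute with Taylor shifts.
-/

open Polynomial

namespace Polynomial

variable {R : Type*}

theorem hasseDeriv_taylor [Semiring R] (k : ℕ) (r : R) (f : R[X]) :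
    hasseDeriv k (taylor r f) = taylor r (hasseDeriv k f) := by
  ext n
  rw [hasseDeriv_coeff, taylor_coeff, taylor_coeff, ← LinearMap.comp_apply, hasseDeriv_comp,
    add_comm, Nat.choose_symm_add]
  simp [nsmul_eq_mul]

theorem hasseDeriv_X_pow [Semiring R] (k n : ℕ) :
    hasseDeriv k ((X : R[X]) ^ n) = (n.choose k : R) • X ^ (n - k) := by
  rw [← monomial_one_right_eq_X_pow, hasseDeriv_monomial, ← monomial_one_right_eq_X_pow,
    smul_monomial, smul_eq_mul]

theorem hasseDeriv_X_sub_C_pow [CommRing R] (k n : ℕ) (r : R) :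
    hasseDeriv k ((X - C r) ^ n) = (n.choose k : R) • (X - C r) ^ (n - k) := by
  have hshift (m : ℕ) : (X - C r) ^ m = taylor (-r) (X ^ m) := by
    rw [taylor_pow, taylor_X, map_neg, sub_eq_add_neg]
  rw [hshift, hasseDeriv_taylor, hasseDeriv_X_pow, map_smul, hshift]

/-- The one-variable model of `∂^{(k)}`, see `quantizedDividedPower_X_pow`. -/
noncomputable def quantizedDividedPower [CommSemiring R] (k : ℕ) : R[X] →ₗ[R] R[X] :=
  LinearMap.mulLeft R (X ^ k) ∘ₗ hasseDeriv k

theorem quantizedDividedPower_apply [CommSemiring R] (k : ℕ) (f : R[X]) :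
    quantizedDividedPower k f = X ^ k * hasseDeriv k f :=
  rfl

theorem quantizedDividedPower_X_pow [CommSemiring R] (k n : ℕ) :
    quantizedDividedPower k ((X : R[X]) ^ n) = (n.choose k : R) • X ^ n := by
  rw [quantizedDividedPower_apply, hasseDeriv_X_pow, mul_smul_comm, ← pow_add]
  rcases le_or_gt k n with hkn | hnk
  · rw [Nat.add_sub_cancel' hkn]
  · simp [Nat.choose_eq_zero_of_lt hnk]

theorem quantizedDividedPower_X_sub_C_pow [CommRing R] (k n : ℕ) (r : R) :
    quantizedDividedPower k ((X - C r) ^ n)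
      = (n.choose k : R) • (X ^ k * (X - C r) ^ (n - k)) := by
  rw [quantizedDividedPower_apply, hasseDeriv_X_sub_C_pow, mul_smul_comm]

end Polynomial

section OrderedAeval

variable (R : Type*) {A : Type*} [CommSemiring R] [Semiring A] [Algebra R A] {d : ℕ}

noncomputable def orderedAeval (x : Fin d → A) : MultilinearMap R (fun _ : Fin d => R[X]) A :=
  (MultilinearMap.mkPiAlgebraFin R d A).compLinearMap fun i => (aeval (x i)).toLinearMap

variable {R}

theorem orderedAeval_apply (x : Fin d → A) (f : Fin d → R[X]) :
    orderedAeval R x f = (List.ofFn fun i => aeval (x i) (f i)).prod :=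
  rfl

theorem map_orderedAeval_of_map_ordered_monomials (x : Fin d → A) (a : Fin d → ℕ)
    (D : A →ₗ[R] A)
    (hD : ∀ n : Fin d → ℕ, D (List.ofFn fun i => x i ^ n i).prod
      = (∏ i, ((n i).choose (a i) : R)) • (List.ofFn fun i => x i ^ n i).prod)
    (f : Fin d → R[X]) :
    D (orderedAeval R x f) = orderedAeval R x fun i => quantizedDividedPower (a i) (f i) := by
  suffices h : D.compMultilinearMap (orderedAeval R x)
      = (orderedAeval R x).compLinearMap fun i => quantizedDividedPower (a i) from
    DFunLike.congr_fun h f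
  refine Module.Basis.ext_multilinear (fun _ => basisMonomials R) fun n => ?_
  simp only [coe_basisMonomials, monomial_one_right_eq_X_pow, LinearMap.compMultilinearMap_apply,
    MultilinearMap.compLinearMap_apply, quantizedDividedPower_X_pow, MultilinearMap.map_smul_univ,
    orderedAeval_apply, map_pow, aeval_X, hD]

end OrderedAeval

theorem quantized_divided_power_on_b_monomials_general
    (k : Type*) [Field k]
    (A : Type*) [Ring A] [Algebra k A]
    (d : ℕ) (g : Fin d → Aˣ)
    (α : Fin d → ℕ)
    (D : A →ₗ[k] A)
    -- the defining property of `∂^{(α)}` on (ordered) group monomials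
    (hD : ∀ γ : Fin d → ℕ,
      D ((List.ofFn fun i => ((g i : A) ^ γ i)).prod)
        = (∏ i : Fin d, ((γ i).choose (α i) : k)) •
            (List.ofFn fun i => ((g i : A) ^ γ i)).prod) :
    ∀ β : Fin d → ℕ,
      D ((List.ofFn fun i => ((g i : A) - 1) ^ β i).prod)
        = (∏ i : Fin d, ((β i).choose (α i) : k)) •
            (List.ofFn fun i => ((g i : A) ^ α i) * ((g i : A) - 1) ^ (β i - α i)).prod := by
  intro β
  have hmap := map_orderedAeval_of_map_ordered_monomials (fun i => (g i : A)) α D hD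
    fun i => (X - C 1) ^ β i
  rw [funext fun i => quantizedDividedPower_X_sub_C_pow (α i) (β i) (1 : k),
    MultilinearMap.map_smul_univ] at hmap
  simpa only [orderedAeval_apply, map_pow, map_sub, map_mul, aeval_X, aeval_C, map_one] using hmap

theorem quantized_divided_power_on_b_monomials
    (p : ℕ) (hp : p.Prime) (k : Type*) [Field k] (hchar : CharP k p)
    (A : Type*) [Ring A] [Algebra k A]
    (d : ℕ) (g : Fin d → Aˣ)
    (α : Fin d → ℕ)
    (D : A →ₗ[k] A)
    -- the defining property of `∂^{(α)}` on (ordered) group monomials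
    (hD : ∀ γ : Fin d → ℕ,
      D ((List.ofFn fun i => ((g i : A) ^ γ i)).prod)
        = (∏ i : Fin d, ((γ i).choose (α i) : k)) •
            (List.ofFn fun i => ((g i : A) ^ γ i)).prod) :
    ∀ β : Fin d → ℕ,
      D ((List.ofFn fun i => ((g i : A) - 1) ^ β i).prod)
        = (∏ i : Fin d, ((β i).choose (α i) : k)) •
            (List.ofFn fun i => ((g i : A) ^ α i) * ((g i : A) - 1) ^ (β i - α i)).prod :=
  quantized_divided_power_on_b_monomials_general k A d g α D hD
end

section
/- Let $G$ be a complete $p$-valued group of finite rank with centre $Z$. Then (a) $Z$ is isolated in $G$ (i.e., $G/Z$ is torsion-free), and (b) for every open subgroup $U$ of $G$, the centre of $U$ equals $Z \cap U$. -/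
/-!
Both parts follow from injectivity of `g ↦ gⁿ` for `n > 0`: if `u` commutes with `xⁿ`, then
`(u x u⁻¹)ⁿ = xⁿ` forces `u x u⁻¹ = x`; in (b), `x ^ p ^ k ∈ U` for large `k` because
`ω (x ^ p ^ k) = ω x + k`.

For `n` prime to `p` one has `ω (cⁿ) = ω c`, while `aⁿ b⁻ⁿ ≡ (a b⁻¹)ⁿ` modulo `ω > ω (a b⁻¹)`.
For `n = p`, let `c = a b⁻¹` and `t = ω c`. Modulo `ω > t + 1` the levels `μ, t + μ, t + 2μ, …`
(with `1 / (p - 1) < μ ≤ min t (ω b)`) form a filtration of length `< p` whose first step has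
exponent `p`, and there `(c b)ᵖ = cᵖ bᵖ` by a collection argument: ordered products of maps
`n ↦ g ^ e n` with polynomial exponents, graded by the depth of `g`, are closed under products,
commutators and partial products, and such a map of degree `≤ p` on the nontrivial part takes the
same value at `p` as at `0`. So `aᵖ = bᵖ` would give `ω (cᵖ) > t + 1 = ω (cᵖ)`.
-/

open scoped commutatorElement fwdDiff

namespace PValuedGroup

def DegLT (d : ℕ) (e : ℕ → ℤ) : Prop := ∀ n, ((Δ_[1])^[d] e) n = 0

section DegLT

variable {d : ℕ} {e : ℕ → ℤ}

lemma DegLT.comp_succ (h : DegLT d e) : DegLT d (fun n => e (n + 1)) := by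
  intro n
  rw [fwdDiff_iter_comp_add]
  exact h _

lemma DegLT.fwdDiff (h : DegLT (d + 1) e) : DegLT d (Δ_[1] e) := by
  intro n
  simpa only [Function.iterate_succ_apply] using h n

lemma DegLT.mono (h : DegLT d e) {d' : ℕ} (hd : d ≤ d') : DegLT d' e := by
  intro n
  obtain ⟨k, rfl⟩ := Nat.exists_eq_add_of_le hd
  have hzero : (Δ_[1])^[k] (0 : ℕ → ℤ) = 0 :=
    Function.iterate_fixed (funext fun _ => sub_self 0) k
  rw [add_comm, Function.iterate_add_apply, show (Δ_[1])^[d] e = 0 from funext h, hzero]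
  rfl

lemma DegLT.eq_zero (h : DegLT 0 e) (n : ℕ) : e n = 0 := h n

lemma degLT_one_const (c : ℤ) : DegLT 1 (fun _ => c) := by
  intro n
  simp

lemma degLT_two_natCast : DegLT 2 (fun n : ℕ => (n : ℤ)) := by
  intro n
  simp [fwdDiff]

lemma fwdDiff_sum_range (e : ℕ → ℤ) : Δ_[1] (fun n => ∑ k ∈ Finset.range n, e k) = e := by
  funext n
  simp [fwdDiff, Finset.sum_range_succ]

lemma DegLT.sum_range (h : DegLT d e) :
    DegLT (d + 1) (fun n => ∑ k ∈ Finset.range n, e k) := by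
  intro n
  rw [Function.iterate_succ_apply, fwdDiff_sum_range]
  exact h n

lemma DegLT.prime_dvd_sub {p : ℕ} (hp : p.Prime) (h : DegLT p e) : (p : ℤ) ∣ e p - e 0 := by
  have newton := shift_eq_sum_fwdDiff_iter 1 e p 0
  simp only [Finset.sum_range_succ', zero_add, smul_eq_mul, mul_one, Nat.choose_zero_right,
    Function.iterate_zero, id_eq, nsmul_eq_mul, Nat.cast_one, one_mul] at newton
  rw [newton, add_sub_cancel_right]
  refine Finset.dvd_sum fun k hk => ?_
  rcases (Nat.succ_le_of_lt (Finset.mem_range.mp hk)).lt_or_eq with hkp | hkp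
  · exact Dvd.dvd.mul_right (by exact_mod_cast hp.dvd_choose_self k.succ_ne_zero hkp) _
  · rw [← Nat.succ_eq_add_one, hkp, h 0, mul_zero]
    exact dvd_zero _

end DegLT

section OrderedProducts

variable {K : Type*} [Group K]

def prodRange (F : ℕ → K) (n : ℕ) : K := ((List.range n).map F).prod

@[simp] lemma prodRange_zero (F : ℕ → K) : prodRange F 0 = 1 := rfl

@[simp] lemma prodRange_succ (F : ℕ → K) (n : ℕ) :
    prodRange F (n + 1) = prodRange F n * F n := by
  simp [prodRange, List.range_succ]

lemma prodRange_const (x : K) (n : ℕ) : prodRange (fun _ => x) n = x ^ n := by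
  induction n with
  | zero => simp
  | succ n ih => rw [prodRange_succ, ih, pow_succ]

lemma map_prodRange {H : Type*} [Group H] (φ : K →* H) (F : ℕ → K) (n : ℕ) :
    φ (prodRange F n) = prodRange (fun k => φ (F k)) n := by
  induction n with
  | zero => simp
  | succ n ih => rw [prodRange_succ, prodRange_succ, map_mul, ih]

lemma prodRange_zpow (g : K) (e : ℕ → ℤ) (n : ℕ) :
    prodRange (fun k => g ^ e k) n = g ^ ∑ k ∈ Finset.range n, e k := by
  induction n with
  | zero => simp
  | succ n ih => rw [prodRange_succ, ih, Finset.sum_range_succ, zpow_add]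

lemma prodRange_mul (U V : ℕ → K) (n : ℕ) :
    prodRange (fun k => U k * V k) n =
      prodRange (fun k => prodRange U (k + 1) * V k * (prodRange U (k + 1))⁻¹) n *
        prodRange U n := by
  induction n with
  | zero => simp
  | succ n ih =>
    simp only [prodRange_succ, ih]
    group

lemma eq_prodRange_of_succ {F C₁ C₂ : ℕ → K} (h : ∀ n, F (n + 1) = C₁ n * F n * C₂ n)
    (n : ℕ) : F n = (prodRange (fun k => (C₁ k)⁻¹) n)⁻¹ * F 0 * prodRange C₂ n := by
  induction n with
  | zero => simp
  | succ n ih =>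
    rw [h n, ih, prodRange_succ, prodRange_succ]
    group

lemma mul_pow_mul_inv_pow (c b : K) (n : ℕ) :
    (c * b) ^ n * (b ^ n)⁻¹ = prodRange (fun i => b ^ i * c * (b ^ i)⁻¹) n := by
  induction n with
  | zero => simp
  | succ n ih =>
    rw [prodRange_succ, ← ih, pow_succ, pow_succ]
    group

lemma conj_eq_mul_commutatorElement (g x : K) : g * x * g⁻¹ = x * ⁅x⁻¹, g⁆ := by
  rw [commutatorElement_def]
  group

end OrderedProducts

section Representable

variable {K : Type*} [Group K]

/-- `Γ i` plays the role of the `(i + 1)`-st term of a central series that vanishes from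
the `p`-th term on; `Γ 0` need not satisfy the commutator condition with itself. -/
structure IsPFiltration (p : ℕ) (Γ : ℕ → Subgroup K) : Prop where
  antitone : Antitone Γ
  commutatorElement_mem : ∀ i j, 1 ≤ i + j → ∀ g ∈ Γ i, ∀ h ∈ Γ j, ⁅g, h⁆ ∈ Γ (i + j + 1)
  eq_bot : Γ (p - 1) = ⊥

/-- Ordered products of maps `n ↦ g ^ e n` with `g ∈ Γ i`, `f ≤ i` and `e` of degree `< d`,
where `d + 2 ≤ i + Q`: each step down the filtration pays for one more degree. -/
inductive Representable (Γ : ℕ → Subgroup K) (f : ℕ) (Q : ℤ) : (ℕ → K) → Prop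
  | one : Representable Γ f Q fun _ => 1
  | zpow_mul {F : ℕ → K} {g : K} {e : ℕ → ℤ} (i d : ℕ) (hfi : f ≤ i) (hg : g ∈ Γ i)
      (he : DegLT d e) (hd : (d : ℤ) + 2 ≤ i + Q) (hF : Representable Γ f Q F) :
      Representable Γ f Q fun n => g ^ e n * F n

lemma IsPFiltration.eq_one_of_mem {p : ℕ} {Γ : ℕ → Subgroup K} (hΓ : IsPFiltration p Γ)
    {k : ℕ} (hk : p - 1 ≤ k) {g : K} (hg : g ∈ Γ k) : g = 1 := by
  simpa [hΓ.eq_bot] using hΓ.antitone hk hg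

namespace Representable

variable {p : ℕ} {Γ : ℕ → Subgroup K} {f : ℕ} {Q : ℤ} {F G : ℕ → K}

lemma of_forall_eq_one (h : ∀ n, F n = 1) : Representable Γ f Q F := by
  rw [show F = fun _ => 1 from funext h]
  exact one

lemma zpow {g : K} {e : ℕ → ℤ} (i d : ℕ) (hfi : f ≤ i) (hg : g ∈ Γ i) (he : DegLT d e)
    (hd : (d : ℤ) + 2 ≤ i + Q) : Representable Γ f Q fun n => g ^ e n := by
  simpa using zpow_mul i d hfi hg he hd one

lemma mul (hF : Representable Γ f Q F) (hG : Representable Γ f Q G) :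
    Representable Γ f Q fun n => F n * G n := by
  induction hF with
  | one => simpa using hG
  | zpow_mul i d hfi hg he hd _ ih => simpa [mul_assoc] using zpow_mul i d hfi hg he hd ih

lemma inv (hF : Representable Γ f Q F) : Representable Γ f Q fun n => (F n)⁻¹ := by
  induction hF with
  | one => simpa using one
  | zpow_mul i d hfi hg he hd _ ih =>
    convert ih.mul (zpow i d hfi (inv_mem hg) he hd) using 2 with n
    rw [mul_inv_rev, inv_zpow]

lemma comp_succ (hF : Representable Γ f Q F) : Representable Γ f Q fun n => F (n + 1) := by
  induction hF with
  | one => exact one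
  | zpow_mul i d hfi hg he hd _ ih => exact zpow_mul i d hfi hg he.comp_succ hd ih

lemma mono (hF : Representable Γ f Q F) {f' : ℕ} {Q' : ℤ} (hf : f' ≤ f) (hQ : Q ≤ Q') :
    Representable Γ f' Q' F := by
  induction hF with
  | one => exact one
  | zpow_mul i d hfi hg he hd _ ih => exact zpow_mul i d (hf.trans hfi) hg he (by omega) ih

lemma apply_mem (hΓ : Antitone Γ) (hF : Representable Γ f Q F) (n : ℕ) : F n ∈ Γ f := by
  induction hF with
  | one => exact one_mem _
  | zpow_mul i d hfi hg he hd _ ih => exact mul_mem (hΓ hfi (zpow_mem hg _)) ih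

lemma apply_eq_one {p : ℕ} (hΓ : IsPFiltration p Γ) (hf : p - 1 ≤ f)
    (hF : Representable Γ f Q F) (n : ℕ) : F n = 1 :=
  hΓ.eq_one_of_mem hf (hF.apply_mem hΓ.antitone n)

/-- The exponents of a representable map have degree `≤ p` on the nontrivial part of the
filtration, so each `e p - e 0` is a multiple of `p`. -/
lemma apply_prime {p : ℕ} (hp : p.Prime) (hΓ : IsPFiltration p Γ)
    (hexp : ∀ g ∈ Γ 1, g ^ p = 1) (hF : Representable Γ 1 4 F) : F p = F 0 := by
  induction hF with
  | one => rfl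
  | @zpow_mul F g e i d hfi hg he hd _ ih =>
    suffices g ^ e p = g ^ e 0 by simp only [this, ih]
    by_cases hi : p - 1 ≤ i
    · simp [hΓ.eq_one_of_mem hi hg]
    · obtain ⟨m, hm⟩ := (he.mono (show d ≤ p by omega)).prime_dvd_sub hp
      rw [show e p = e 0 + p * m by omega, zpow_add, _root_.zpow_mul, zpow_natCast,
        hexp g (hΓ.antitone hfi hg), one_zpow, mul_one]

end Representable

end Representable

section Collection

variable {K : Type*} [Group K] {p : ℕ} {Γ : ℕ → Subgroup K}

/-! In the three statements below the slack `r` bounds the depth of the mutual recursion: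
every recursive call works further down the filtration, which vanishes from `Γ (p - 1)` on. -/

def IntegralsRepresentable (p : ℕ) (Γ : ℕ → Subgroup K) (r : ℕ) : Prop :=
  ∀ (f : ℕ) (Q : ℤ) (F : ℕ → K), p ≤ f + r + 1 → 1 ≤ f → Q ≤ 3 →
    Representable Γ f Q F → Representable Γ f (Q + 1) (prodRange F)

def CommutatorsRepresentable (p : ℕ) (Γ : ℕ → Subgroup K) (r : ℕ) : Prop :=
  ∀ (f₁ f₂ : ℕ) (Q₁ Q₂ : ℤ) (F₁ F₂ : ℕ → K), p ≤ f₁ + f₂ + r + 2 → 1 ≤ f₁ + f₂ →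
    Q₁ ≤ 4 → Q₂ ≤ 4 → Representable Γ f₁ Q₁ F₁ → Representable Γ f₂ Q₂ F₂ →
    Representable Γ (f₁ + f₂ + 1) (Q₁ + Q₂ - 4) fun n => ⁅F₁ n, F₂ n⁆

def ZPowCommutatorsRepresentable (p : ℕ) (Γ : ℕ → Subgroup K) (r : ℕ) : Prop :=
  ∀ (i j d₁ d₂ : ℕ) (Q₁ Q₂ : ℤ) (x y : K) (α β : ℕ → ℤ), p ≤ i + j + r + 2 →
    x ∈ Γ i → y ∈ Γ j → (∀ z w : ℤ, ⁅x ^ z, y ^ w⁆ ∈ Γ (i + j + 1)) →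
    DegLT d₁ α → DegLT d₂ β → (d₁ : ℤ) + 2 ≤ i + Q₁ → (d₂ : ℤ) + 2 ≤ j + Q₂ → Q₁ ≤ 4 → Q₂ ≤ 4 →
    Representable Γ (i + j + 1) (Q₁ + Q₂ - 4) fun n => ⁅x ^ α n, y ^ β n⁆

lemma CommutatorsRepresentable.conj {r : ℕ} (h : CommutatorsRepresentable p Γ r)
    {f g : ℕ} {Q Q' : ℤ} {F G : ℕ → K} (hF : Representable Γ f Q F)
    (hG : Representable Γ g Q' G) (hroom : p ≤ f + g + r + 2) (hfg : 1 ≤ f + g) (hQ : Q ≤ 4)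
    (hQ' : Q' ≤ 4) : Representable Γ f Q fun n => G n * F n * (G n)⁻¹ := by
  simp only [conj_eq_mul_commutatorElement]
  exact hF.mul ((h f g Q Q' _ _ hroom hfg hQ hQ' hF.inv hG).mono (by omega) (by omega))

lemma integralsRepresentable_zero (hΓ : IsPFiltration p Γ) : IntegralsRepresentable p Γ 0 := by
  intro f Q F hroom _ _ hF
  refine Representable.of_forall_eq_one fun n => ?_
  rw [show F = fun _ => 1 from funext (hF.apply_eq_one hΓ (by omega)), prodRange_const, one_pow]

lemma commutatorsRepresentable_zero (hΓ : IsPFiltration p Γ) :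
    CommutatorsRepresentable p Γ 0 := by
  intro f₁ f₂ Q₁ Q₂ F₁ F₂ hroom hf _ _ hF₁ hF₂
  refine Representable.of_forall_eq_one fun n => hΓ.eq_one_of_mem (k := f₁ + f₂ + 1) (by omega) ?_
  exact hΓ.commutatorElement_mem f₁ f₂ hf _ (hF₁.apply_mem hΓ.antitone n) _
    (hF₂.apply_mem hΓ.antitone n)

lemma integralsRepresentable_succ {r : ℕ} (hint : IntegralsRepresentable p Γ r)
    (hcomm : CommutatorsRepresentable p Γ r) : IntegralsRepresentable p Γ (r + 1) := by
  intro f Q F hroom hf hQ hF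
  induction hF with
  | one => exact Representable.of_forall_eq_one fun n => by rw [prodRange_const, one_pow]
  | @zpow_mul T g e i d hfi hg he hd hT ih =>
    set S : ℕ → ℤ := fun n => ∑ k ∈ Finset.range n, e k
    have hS : Representable Γ i (Q + 1) fun k => g ^ S (k + 1) :=
      .zpow i (d + 1) le_rfl hg he.sum_range.comp_succ (by omega)
    have hD : Representable Γ (f + 1) (2 * Q - 3) fun k => ⁅(T k)⁻¹, g ^ S (k + 1)⁆ :=
      (hcomm f i Q (Q + 1) _ _ (by omega) (by omega) (by omega) (by omega) hT.inv hS).mono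
        (by omega) (by omega)
    have hE := hcomm.conj hD ih.comp_succ (by omega) (by omega) (by omega) (by omega)
    -- Collecting the powers of `g` conjugates each `T k` into `T k * D k` with `D` deeper in
    -- the filtration; collecting the `T k` then conjugates each `D k` by a partial product.
    have hcollect : prodRange (fun k => g ^ e k * T k) = fun n =>
        prodRange (fun k => prodRange T (k + 1) * ⁅(T k)⁻¹, g ^ S (k + 1)⁆ *
          (prodRange T (k + 1))⁻¹) n * prodRange T n * g ^ S n := by
      funext n
      simp only [prodRange_mul (fun k => g ^ e k) T, prodRange_zpow,
        conj_eq_mul_commutatorElement, prodRange_mul T, S]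
    rw [hcollect]
    exact (((hint (f + 1) _ _ (by omega) (by omega) (by omega) hE).mono (by omega)
      (by omega)).mul ih).mul (.zpow i (d + 1) hfi hg he.sum_range (by omega))

lemma zpow_eq_zpow_mul_zpow_fwdDiff (x : K) (α : ℕ → ℤ) (n : ℕ) :
    x ^ α (n + 1) = x ^ α n * x ^ Δ_[1] α n := by
  rw [← zpow_add, fwdDiff, add_sub_cancel]

/-- The commutator of two power maps satisfies `c (n + 1) = C₁ n * c n * C₂ n`, where `C₁`, `C₂`
are conjugates of commutators with a differenced exponent; integrating gives `c`. -/
lemma representable_commutatorElement_zpow_of_fwdDiff {r i j d₁ d₂ : ℕ} {Q₁ Q₂ : ℤ} {x y : K}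
    {α β : ℕ → ℤ} (hcomm : CommutatorsRepresentable p Γ r)
    (hint : IntegralsRepresentable p Γ (r + 1)) (hroom : p ≤ i + j + r + 3) (hx : x ∈ Γ i)
    (hy : y ∈ Γ j) (hxy : ⁅x ^ α 0, y ^ β 0⁆ ∈ Γ (i + j + 1)) (hα : DegLT d₁ α)
    (hβ : DegLT d₂ β) (hd₁ : (d₁ : ℤ) + 2 ≤ i + Q₁) (hd₂ : (d₂ : ℤ) + 2 ≤ j + Q₂)
    (hQ₁ : Q₁ ≤ 4) (hQ₂ : Q₂ ≤ 4) (hd₁_pos : 1 ≤ d₁) (hd₂_pos : 1 ≤ d₂)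
    (h₁ : Representable Γ (i + j + 1) (Q₁ + Q₂ - 5) fun n => ⁅x ^ Δ_[1] α n, y ^ β (n + 1)⁆)
    (h₂ : Representable Γ (i + j + 1) (Q₁ + Q₂ - 5) fun n => ⁅x ^ α n, y ^ Δ_[1] β n⁆) :
    Representable Γ (i + j + 1) (Q₁ + Q₂ - 4) fun n => ⁅x ^ α n, y ^ β n⁆ := by
  have hC₁ := hcomm.conj h₁ (.zpow i d₁ le_rfl hx hα hd₁) (by omega) (by omega) (by omega) hQ₁
  have hC₂ := hcomm.conj h₂ (.zpow j d₂ le_rfl hy hβ hd₂) (by omega) (by omega) (by omega) hQ₂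
  have hrec (n : ℕ) : ⁅x ^ α (n + 1), y ^ β (n + 1)⁆ =
      x ^ α n * ⁅x ^ Δ_[1] α n, y ^ β (n + 1)⁆ * (x ^ α n)⁻¹ * ⁅x ^ α n, y ^ β n⁆ *
        (y ^ β n * ⁅x ^ α n, y ^ Δ_[1] β n⁆ * (y ^ β n)⁻¹) := by
    rw [zpow_eq_zpow_mul_zpow_fwdDiff x, zpow_eq_zpow_mul_zpow_fwdDiff y]
    simp only [commutatorElement_def]
    group
  rw [funext (eq_prodRange_of_succ (F := fun n => ⁅x ^ α n, y ^ β n⁆) hrec)]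
  have hconst : Representable Γ (i + j + 1) (Q₁ + Q₂ - 5 + 1) fun _ => ⁅x ^ α 0, y ^ β 0⁆ := by
    simpa using Representable.zpow (i + j + 1) 1 le_rfl hxy (degLT_one_const 1) (by omega)
  refine Representable.mono ?_ le_rfl (by omega : Q₁ + Q₂ - 5 + 1 ≤ Q₁ + Q₂ - 4)
  exact ((hint _ _ _ (by omega) (by omega) (by omega) hC₁.inv).inv.mul hconst).mul
    (hint _ _ _ (by omega) (by omega) (by omega) hC₂)

lemma zpowCommutatorsRepresentable_succ {r : ℕ} (hcomm : CommutatorsRepresentable p Γ r)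
    (hint : IntegralsRepresentable p Γ (r + 1)) : ZPowCommutatorsRepresentable p Γ (r + 1) := by
  intro i j d₁ d₂ Q₁ Q₂ x y α β hroom hx hy hxy hα hβ hd₁ hd₂ hQ₁ hQ₂
  induction hs : d₁ + d₂ using Nat.strong_induction_on generalizing d₁ d₂ Q₁ Q₂ α β with
  | _ s ih =>
    rcases d₁ with _ | d₁
    · exact .of_forall_eq_one fun n => by
        rw [hα.eq_zero, zpow_zero, commutatorElement_one_left]
    rcases d₂ with _ | d₂
    · exact .of_forall_eq_one fun n => by
        rw [hβ.eq_zero, zpow_zero, commutatorElement_one_right]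
    refine representable_commutatorElement_zpow_of_fwdDiff hcomm hint hroom hx hy (hxy _ _) hα hβ
      hd₁ hd₂ hQ₁ hQ₂ (by omega) (by omega) ?_ ?_
    · exact (ih _ (by omega) d₁ (d₂ + 1) (Q₁ - 1) Q₂ _ _ hα.fwdDiff hβ.comp_succ (by omega) hd₂
        (by omega) hQ₂ rfl).mono le_rfl (by omega)
    · exact (ih _ (by omega) (d₁ + 1) d₂ Q₁ (Q₂ - 1) _ _ hα hβ.fwdDiff hd₁ (by omega) hQ₁
        (by omega) rfl).mono le_rfl (by omega)

lemma commutatorsRepresentable_succ (hΓ : IsPFiltration p Γ) {r : ℕ}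
    (hcomm : CommutatorsRepresentable p Γ r) (hzpow : ZPowCommutatorsRepresentable p Γ (r + 1)) :
    CommutatorsRepresentable p Γ (r + 1) := by
  intro f₁ f₂ Q₁ Q₂ F₁ F₂ hroom hf hQ₁ hQ₂ hF₁ hF₂
  have hhead : ∀ (i d : ℕ) (g : K) (e : ℕ → ℤ), f₁ ≤ i → g ∈ Γ i → DegLT d e →
      (d : ℤ) + 2 ≤ i + Q₁ →
      Representable Γ (f₁ + f₂ + 1) (Q₁ + Q₂ - 4) fun n => ⁅g ^ e n, F₂ n⁆ := by
    intro i d g e hfi hg he hd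
    induction hF₂ with
    | one => exact .of_forall_eq_one fun n => commutatorElement_one_right _
    | @zpow_mul F h e' j d' hfj hh he' hd' _ ih =>
      have hxy : ∀ z w : ℤ, ⁅g ^ z, h ^ w⁆ ∈ Γ (i + j + 1) := fun z w =>
        hΓ.commutatorElement_mem i j (by omega) _ (zpow_mem hg z) _ (zpow_mem hh w)
      have hgh := hzpow i j d d' Q₁ Q₂ g h e e' (by omega) hg hh hxy he he' hd hd' hQ₁ hQ₂
      have hconj := hcomm.conj ih (.zpow j d' hfj hh he' hd') (by omega) (by omega) (by omega) hQ₂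
      simpa only [commutatorElement_mul_right_eq_mul_conj, mul_assoc] using
        (hgh.mono (by omega) le_rfl).mul hconj
  induction hF₁ with
  | one => exact .of_forall_eq_one fun n => commutatorElement_one_left _
  | zpow_mul i d hfi hg he hd _ ih =>
    simp only [commutatorElement_mul_left_eq_conj_mul]
    exact (hcomm.conj ih (.zpow i d hfi hg he hd) (by omega) (by omega) (by omega) hQ₁).mul
      (hhead i d _ _ hfi hg he hd)

lemma integralsRepresentable_and_commutatorsRepresentable (hΓ : IsPFiltration p Γ) (r : ℕ) :
    IntegralsRepresentable p Γ r ∧ CommutatorsRepresentable p Γ r := by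
  induction r with
  | zero => exact ⟨integralsRepresentable_zero hΓ, commutatorsRepresentable_zero hΓ⟩
  | succ r ih =>
    obtain ⟨hint, hcomm⟩ := ih
    have hint' := integralsRepresentable_succ hint hcomm
    exact ⟨hint', commutatorsRepresentable_succ hΓ hcomm
      (zpowCommutatorsRepresentable_succ hcomm hint')⟩

lemma prodRange_conj_commutatorElement (x y : K) (n : ℕ) :
    prodRange (fun k => x ^ (k : ℤ) * ⁅y ^ (k : ℤ), x ^ (1 : ℤ)⁆ * (x ^ (k : ℤ))⁻¹) n =
      (x * y) ^ n * (y ^ n)⁻¹ * (x ^ n)⁻¹ := by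
  induction n with
  | zero => simp
  | succ n ih =>
    rw [prodRange_succ, ih]
    simp only [zpow_natCast, zpow_one, pow_succ, commutatorElement_def]
    group

theorem IsPFiltration.mul_pow (hp : p.Prime) (hΓ : IsPFiltration p Γ)
    (hexp : ∀ g ∈ Γ 1, g ^ p = 1) {x y : K} (hx : x ∈ Γ 0) (hy : y ∈ Γ 0)
    (hyx : ∀ z w : ℤ, ⁅y ^ z, x ^ w⁆ ∈ Γ 1) : (x * y) ^ p = x ^ p * y ^ p := by
  obtain ⟨hint, hcomm⟩ := integralsRepresentable_and_commutatorsRepresentable hΓ p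
  have hint' := integralsRepresentable_succ hint hcomm
  have hcomm_yx := zpowCommutatorsRepresentable_succ hcomm hint' 0 0 2 1 4 3 y x (fun n => n)
    (fun _ => 1) (by omega) hy hx hyx degLT_two_natCast (degLT_one_const 1) (by norm_num)
    (by norm_num) le_rfl (by norm_num)
  have hconj := hcomm.conj hcomm_yx (.zpow 0 2 le_rfl hx degLT_two_natCast (by norm_num) :
    Representable Γ 0 4 fun n => x ^ (n : ℤ)) (by omega) le_rfl (by norm_num) le_rfl
  have h := (hint' 1 3 _ (by omega) le_rfl le_rfl hconj).apply_prime hp hΓ hexp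
  rw [prodRange_conj_commutatorElement, prodRange_conj_commutatorElement] at h
  simp only [pow_zero, mul_one, inv_one] at h
  rwa [mul_assoc, ← mul_inv_rev, mul_inv_eq_one] at h

end Collection

section Valuation

variable {G : Type*} [Group G] {p : ℕ} {ω : G → WithTop ℝ}

structure IsPValuation (p : ℕ) (ω : G → WithTop ℝ) : Prop where
  min_le_mul_inv : ∀ x y : G, min (ω x) (ω y) ≤ ω (x * y⁻¹)
  add_le_commutator : ∀ x y : G, ω x + ω y ≤ ω (x⁻¹ * y⁻¹ * x * y)
  eq_top_iff : ∀ x : G, ω x = ⊤ ↔ x = 1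
  inv_sub_one_lt : ∀ x : G, ((((p : ℝ) - 1)⁻¹ : ℝ) : WithTop ℝ) < ω x
  map_pow_prime : ∀ x : G, ω (x ^ p) = ω x + 1

namespace IsPValuation

variable (hω : IsPValuation p ω)
include hω

lemma map_one : ω 1 = ⊤ := (hω.eq_top_iff 1).mpr rfl

lemma le_map_inv (x : G) : ω x ≤ ω x⁻¹ := by
  simpa [hω.map_one] using hω.min_le_mul_inv 1 x

lemma map_inv (x : G) : ω x⁻¹ = ω x :=
  le_antisymm (by simpa using hω.le_map_inv x⁻¹) (hω.le_map_inv x)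

lemma min_le_mul (x y : G) : min (ω x) (ω y) ≤ ω (x * y) := by
  simpa [hω.map_inv] using hω.min_le_mul_inv x y⁻¹

lemma add_le_commutatorElement (x y : G) : ω x + ω y ≤ ω ⁅x, y⁆ := by
  simpa [hω.map_inv, commutatorElement_def] using hω.add_le_commutator x⁻¹ y⁻¹

lemma pos (x : G) : 0 < ω x := by
  rcases p.eq_zero_or_pos with rfl | hp
  · have h := hω.map_pow_prime x
    rw [pow_zero, hω.map_one, eq_comm, WithTop.add_eq_top] at h
    simp [h.resolve_right WithTop.one_ne_top]
  · refine lt_of_le_of_lt ?_ (hω.inv_sub_one_lt x)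
    have : (1 : ℝ) ≤ p := by exact_mod_cast hp
    exact WithTop.coe_nonneg.mpr (inv_nonneg.mpr (by linarith))

def level (τ : WithTop ℝ) : Subgroup G where
  carrier := {g | τ ≤ ω g}
  one_mem' := by simp [hω.map_one]
  mul_mem' ha hb := le_trans (le_min ha hb) (hω.min_le_mul _ _)
  inv_mem' ha := by simpa [hω.map_inv] using ha

def levelGT (τ : ℝ) : Subgroup G where
  carrier := {g | (τ : WithTop ℝ) < ω g}
  one_mem' := by simp [hω.map_one]
  mul_mem' ha hb := lt_of_lt_of_le (lt_min ha hb) (hω.min_le_mul _ _)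
  inv_mem' ha := by simpa [hω.map_inv] using ha

lemma mem_level {τ : WithTop ℝ} {g : G} : g ∈ hω.level τ ↔ τ ≤ ω g := Iff.rfl

lemma mem_levelGT {τ : ℝ} {g : G} : g ∈ hω.levelGT τ ↔ (τ : WithTop ℝ) < ω g := Iff.rfl

lemma le_map_zpow (x : G) (z : ℤ) : ω x ≤ ω (x ^ z) :=
  zpow_mem (hω.mem_level.mpr le_rfl) z

lemma le_map_conj (g x : G) : ω x ≤ ω (g * x * g⁻¹) := by
  rw [conj_eq_mul_commutatorElement]
  refine le_trans (le_min le_rfl ?_) (hω.min_le_mul _ _)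
  calc ω x = ω x⁻¹ + 0 := by rw [add_zero, hω.map_inv]
    _ ≤ ω x⁻¹ + ω g := add_le_add le_rfl (hω.pos g).le
    _ ≤ ω ⁅x⁻¹, g⁆ := hω.add_le_commutatorElement _ _

lemma map_conj (g x : G) : ω (g * x * g⁻¹) = ω x :=
  le_antisymm (by simpa [mul_assoc] using hω.le_map_conj g⁻¹ (g * x * g⁻¹)) (hω.le_map_conj g x)

instance levelGT_normal (τ : ℝ) : (hω.levelGT τ).Normal where
  conj_mem x hx g := by rwa [mem_levelGT, hω.map_conj]

lemma map_pow_prime_pow (x : G) (k : ℕ) : ω (x ^ p ^ k) = ω x + k := by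
  induction k with
  | zero => simp
  | succ k ih =>
    rw [pow_succ, pow_mul, hω.map_pow_prime, ih, add_assoc]
    norm_cast

lemma map_pow_of_not_dvd (hp : p.Prime) {M : ℕ} (hM : ¬ p ∣ M) (x : G) : ω (x ^ M) = ω x := by
  refine le_antisymm ?_ (by simpa using hω.le_map_zpow x M)
  obtain ⟨u, v, huv⟩ : IsCoprime (M : ℤ) p :=
    Int.isCoprime_iff_gcd_eq_one.mpr (by exact_mod_cast (hp.coprime_iff_not_dvd.mpr hM).symm)
  have hx : x = (x ^ M) ^ u * (x ^ p) ^ v := by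
    rw [← zpow_natCast, ← zpow_natCast, ← zpow_mul, ← zpow_mul, ← zpow_add, mul_comm,
      mul_comm (p : ℤ), huv, zpow_one]
  by_contra! h
  have hlt : ω x < ω (x ^ p) := by
    simpa [hω.map_pow_prime] using WithTop.add_lt_add_left h.ne_top zero_lt_one
  have hmin := hω.min_le_mul ((x ^ M) ^ u) ((x ^ p) ^ v)
  rw [← hx] at hmin
  exact hmin.not_gt (lt_min (h.trans_le (hω.le_map_zpow _ u)) (hlt.trans_le (hω.le_map_zpow _ v)))


end IsPValuation

lemma inv_sub_one_pos {p : ℕ} (hp : 2 ≤ p) : 0 < ((p : ℝ) - 1)⁻¹ := by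
  have : (2 : ℝ) ≤ p := by exact_mod_cast hp
  exact inv_pos.mpr (by linarith)

def stepLevel (t μ : ℝ) (k : ℕ) : ℝ := if k = 0 then μ else t + k * μ

lemma stepLevel_mono {t μ : ℝ} (ht : 0 ≤ t) (hμ : 0 < μ) : Monotone (stepLevel t μ) := by
  refine monotone_nat_of_le_succ fun k => ?_
  rcases Nat.eq_zero_or_pos k with rfl | hk
  · simp [stepLevel]; linarith
  · simp [stepLevel, hk.ne']; linarith

lemma stepLevel_add_add_one_le {t μ : ℝ} (hμt : μ ≤ t) {i j : ℕ} (hij : 1 ≤ i + j) :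
    stepLevel t μ (i + j + 1) ≤ stepLevel t μ i + stepLevel t μ j := by
  rcases Nat.eq_zero_or_pos i with rfl | hi <;> rcases Nat.eq_zero_or_pos j with rfl | hj
  · omega
  · simp [stepLevel, hj.ne']; linarith
  · simp [stepLevel, hi.ne']; linarith
  · simp [stepLevel, hi.ne', hj.ne']; nlinarith

namespace IsPValuation

variable (hω : IsPValuation p ω)
include hω

/-- From step `p - 1` on, the levels exceed `t + (p - 1) μ > t + 1`. -/
lemma isPFiltration_map_level (hp : 2 ≤ p) {t μ : ℝ} (hμ : ((p : ℝ) - 1)⁻¹ < μ)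
    (hμt : μ ≤ t) : IsPFiltration p fun k =>
      (hω.level (stepLevel t μ k)).map (QuotientGroup.mk' (hω.levelGT (t + 1))) := by
  have hp1 : (1 : ℝ) ≤ p - 1 := by
    have : (2 : ℝ) ≤ p := by exact_mod_cast hp
    linarith
  have hμ_pos : 0 < μ := (inv_sub_one_pos hp).trans hμ
  refine ⟨antitone_nat_of_succ_le fun k => Subgroup.map_mono fun g hg => ?_, ?_, ?_⟩
  · exact le_trans (WithTop.coe_le_coe.mpr (stepLevel_mono (by linarith) hμ_pos k.le_succ)) hg
  · rintro i j hij _ ⟨g, hg, rfl⟩ _ ⟨h, hh, rfl⟩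
    rw [← map_commutatorElement]
    refine Subgroup.mem_map_of_mem _ (le_trans ?_ (hω.add_le_commutatorElement g h))
    exact le_trans (by exact_mod_cast stepLevel_add_add_one_le hμt hij) (add_le_add hg hh)
  · rw [Subgroup.map_eq_bot_iff, QuotientGroup.ker_mk']
    intro g hg
    refine lt_of_lt_of_le (WithTop.coe_lt_coe.mpr ?_) (hω.mem_level.mp hg)
    have : 1 < ((p : ℝ) - 1) * μ := by
      have h := mul_lt_mul_of_pos_left hμ (show (0 : ℝ) < p - 1 by linarith)
      rwa [mul_inv_cancel₀ (by linarith)] at h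
    simp only [stepLevel, show p - 1 ≠ 0 by omega, if_false, Nat.cast_sub (by omega : 1 ≤ p)]
    push_cast
    linarith

lemma exists_inv_sub_one_lt_le_min {c : G} {t : ℝ} (ht : ω c = t) (b : G) :
    ∃ μ : ℝ, ((p : ℝ) - 1)⁻¹ < μ ∧ μ ≤ t ∧ (μ : WithTop ℝ) ≤ ω b := by
  have hεt : ((p : ℝ) - 1)⁻¹ < t := by exact_mod_cast ht ▸ hω.inv_sub_one_lt c
  cases hb : ω b with
  | top => exact ⟨t, hεt, le_rfl, le_top⟩
  | coe β =>
    have hεβ : ((p : ℝ) - 1)⁻¹ < β := by exact_mod_cast hb ▸ hω.inv_sub_one_lt b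
    exact ⟨min t β, lt_min hεt hεβ, min_le_left _ _, by exact_mod_cast min_le_right _ _⟩

lemma mul_pow_mul_inv_mem_levelGT (hp : p.Prime) {c : G} {t : ℝ} (ht : ω c = t) (b : G) :
    (c * b) ^ p * (c ^ p * b ^ p)⁻¹ ∈ hω.levelGT (t + 1) := by
  obtain ⟨μ, hμ, hμt, hμb⟩ := hω.exists_inv_sub_one_lt_le_min ht b
  have hμ_pos : 0 < μ := (inv_sub_one_pos hp.two_le).trans hμ
  have hΓ := hω.isPFiltration_map_level hp.two_le hμ hμt
  set N := hω.levelGT (t + 1)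
  have hexp : ∀ g ∈ (hω.level (stepLevel t μ 1)).map (QuotientGroup.mk' N), g ^ p = 1 := by
    rintro _ ⟨g, hg, rfl⟩
    rw [← map_pow, ← MonoidHom.mem_ker, QuotientGroup.ker_mk', hω.mem_levelGT,
      hω.map_pow_prime]
    have hg' : ((t + μ : ℝ) : WithTop ℝ) ≤ ω g := by simpa [stepLevel, hω.mem_level] using hg
    calc ((t + 1 : ℝ) : WithTop ℝ) < ((t + μ : ℝ) : WithTop ℝ) + 1 := by
          exact_mod_cast (show t + 1 < t + μ + 1 by linarith)
      _ ≤ ω g + 1 := by gcongr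
  have hc : (c : G ⧸ N) ∈ (hω.level (stepLevel t μ 0)).map (QuotientGroup.mk' N) :=
    Subgroup.mem_map_of_mem _ (by simp [stepLevel, hω.mem_level, ht, hμt])
  have hb : (b : G ⧸ N) ∈ (hω.level (stepLevel t μ 0)).map (QuotientGroup.mk' N) :=
    Subgroup.mem_map_of_mem _ (by simpa [stepLevel, hω.mem_level] using hμb)
  have hbc : ∀ z w : ℤ, ⁅(b : G ⧸ N) ^ z, (c : G ⧸ N) ^ w⁆ ∈
      (hω.level (stepLevel t μ 1)).map (QuotientGroup.mk' N) := by
    intro z w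
    refine Subgroup.mem_map_of_mem (QuotientGroup.mk' N) (x := ⁅b ^ z, c ^ w⁆) ?_
    calc ((stepLevel t μ 1 : ℝ) : WithTop ℝ) = (μ : WithTop ℝ) + t := by
          simp [stepLevel, add_comm]
      _ ≤ ω (b ^ z) + ω (c ^ w) :=
          add_le_add (hμb.trans (hω.le_map_zpow b z)) (ht ▸ hω.le_map_zpow c w)
      _ ≤ ω ⁅b ^ z, c ^ w⁆ := hω.add_le_commutatorElement _ _
  have h := hΓ.mul_pow hp hexp hc hb hbc
  rw [← QuotientGroup.eq_one_iff]
  simp only [QuotientGroup.mk_mul, QuotientGroup.mk_pow, QuotientGroup.mk_inv, h, mul_inv_cancel]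

lemma pow_prime_injective (hp : p.Prime) : Function.Injective fun g : G => g ^ p := by
  intro a b hab
  by_contra hne
  obtain ⟨t, ht⟩ := WithTop.ne_top_iff_exists.mp
    ((hω.eq_top_iff _).not.mpr (mt mul_inv_eq_one.mp hne))
  have h := hω.mul_pow_mul_inv_mem_levelGT hp ht.symm b
  rw [inv_mul_cancel_right, show a ^ p = b ^ p from hab, mul_inv_rev, mul_inv_cancel_left,
    hω.mem_levelGT, hω.map_inv, hω.map_pow_prime, ← ht] at h
  norm_cast at h
  exact lt_irrefl _ h

lemma mul_pow_mul_inv_pow_mem_levelGT {c : G} {t : ℝ} (ht : ω c = t) (b : G) (M : ℕ) :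
    (c * b) ^ M * (b ^ M)⁻¹ * (c ^ M)⁻¹ ∈ hω.levelGT t := by
  set N := hω.levelGT t
  have hconj (i : ℕ) : QuotientGroup.mk' N (b ^ i * c * (b ^ i)⁻¹) = c := by
    rw [conj_eq_mul_commutatorElement, map_mul, QuotientGroup.mk'_apply, mul_eq_left,
      ← MonoidHom.mem_ker, QuotientGroup.ker_mk', hω.mem_levelGT]
    calc (t : WithTop ℝ) < t + ω (b ^ i) := by
          simpa using WithTop.add_lt_add_left WithTop.coe_ne_top (hω.pos (b ^ i))
      _ = ω c⁻¹ + ω (b ^ i) := by rw [hω.map_inv, ht]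
      _ ≤ ω ⁅c⁻¹, b ^ i⁆ := hω.add_le_commutatorElement _ _
  rw [← QuotientGroup.eq_one_iff, QuotientGroup.mk_mul, QuotientGroup.mk_inv, mul_inv_eq_one,
    mul_pow_mul_inv_pow, ← QuotientGroup.mk'_apply, map_prodRange]
  simp only [hconj, prodRange_const, QuotientGroup.mk_pow]

lemma pow_injective_of_not_dvd (hp : p.Prime) {M : ℕ} (hM : ¬ p ∣ M) :
    Function.Injective fun g : G => g ^ M := by
  intro a b hab
  by_contra hne
  obtain ⟨t, ht⟩ := WithTop.ne_top_iff_exists.mp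
    ((hω.eq_top_iff _).not.mpr (mt mul_inv_eq_one.mp hne))
  have h := hω.mul_pow_mul_inv_pow_mem_levelGT ht.symm b M
  rw [inv_mul_cancel_right, show a ^ M = b ^ M from hab, mul_inv_cancel, one_mul,
    hω.mem_levelGT, hω.map_inv, hω.map_pow_of_not_dvd hp hM, ← ht] at h
  exact lt_irrefl _ h

lemma pow_prime_pow_injective (hp : p.Prime) (k : ℕ) :
    Function.Injective fun g : G => g ^ p ^ k := by
  induction k with
  | zero => intro a b h; simpa using h
  | succ k ih =>
    simpa only [pow_succ, pow_mul, Function.comp_def] using (hω.pow_prime_injective hp).comp ih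

lemma pow_injective (hp : p.Prime) {n : ℕ} (hn : 0 < n) :
    Function.Injective fun g : G => g ^ n := by
  obtain ⟨k, M, hM, rfl⟩ := Nat.exists_eq_pow_mul_and_not_dvd hn.ne' p hp.ne_one
  simpa only [pow_mul, Function.comp_def] using
    (hω.pow_injective_of_not_dvd hp hM).comp (hω.pow_prime_pow_injective hp k)

lemma commute_of_commute_pow (hp : p.Prime) {n : ℕ} (hn : 0 < n) {u x : G}
    (h : Commute u (x ^ n)) : Commute u x := by
  have hconj : (u * x * u⁻¹) ^ n = x ^ n := by rw [conj_pow, h.eq, mul_inv_cancel_right]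
  exact mul_inv_eq_iff_eq_mul.mp (hω.pow_injective hp hn hconj)

end IsPValuation

end Valuation

end PValuedGroup

theorem centre_isolated_and_centre_of_open_subgroup_general
    (p : ℕ) (hp : p.Prime) (G : Type*) [Group G]
    (ω : G → WithTop ℝ)
    -- `ω` is a `p`-valuation:
    (hquot : ∀ x y : G, min (ω x) (ω y) ≤ ω (x * y⁻¹))
    (hcomm : ∀ x y : G, ω x + ω y ≤ ω (x⁻¹ * y⁻¹ * x * y))
    (htop : ∀ x : G, ω x = ⊤ ↔ x = 1)
    (hgt : ∀ x : G, ((((p : ℝ) - 1)⁻¹ : ℝ) : WithTop ℝ) < ω x)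
    (hpow : ∀ x : G, ω (x ^ p) = ω x + 1) :
    -- (a) the centre is isolated in `G`
    (∀ (g : G) (n : ℕ), 0 < n → g ^ n ∈ Subgroup.center G → g ∈ Subgroup.center G) ∧
    -- (b) for every open subgroup `U`, `Z(U) = Z(G) ∩ U`
    (∀ U : Subgroup G,
      (∃ ν : ℝ, ∀ g : G, ((ν : ℝ) : WithTop ℝ) ≤ ω g → g ∈ U) →
      ∀ u ∈ U, (∀ x ∈ U, u * x = x * u) ↔ u ∈ Subgroup.center G) := by
  have hω : PValuedGroup.IsPValuation p ω := ⟨hquot, hcomm, htop, hgt, hpow⟩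
  refine ⟨fun g n hn hg => Subgroup.mem_center_iff.mpr fun x =>
    hω.commute_of_commute_pow hp hn (Subgroup.mem_center_iff.mp hg x), ?_⟩
  rintro U ⟨ν, hν⟩ u -
  refine ⟨fun hu => Subgroup.mem_center_iff.mpr fun x => ?_,
    fun hu x _ => (Subgroup.mem_center_iff.mp hu x).symm⟩
  have hxU : x ^ p ^ ⌈ν⌉₊ ∈ U := hν _ <| by
    rw [hω.map_pow_prime_pow]
    calc (ν : WithTop ℝ) ≤ (⌈ν⌉₊ : ℝ) := by exact_mod_cast Nat.le_ceil ν
      _ ≤ ω x + ⌈ν⌉₊ := by simpa using le_add_of_nonneg_left (hω.pos x).le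
  exact (hω.commute_of_commute_pow hp (pow_pos hp.pos _) (hu _ hxU)).eq.symm

theorem centre_isolated_and_centre_of_open_subgroup
    (p : ℕ) (hp : p.Prime) (G : Type*) [Group G]
    (ω : G → WithTop ℝ)
    -- `ω` is a `p`-valuation:
    (hquot : ∀ x y : G, min (ω x) (ω y) ≤ ω (x * y⁻¹))
    (hcomm : ∀ x y : G, ω x + ω y ≤ ω (x⁻¹ * y⁻¹ * x * y))
    (htop : ∀ x : G, ω x = ⊤ ↔ x = 1)
    (hgt : ∀ x : G, ((((p : ℝ) - 1)⁻¹ : ℝ) : WithTop ℝ) < ω x)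
    (hpow : ∀ x : G, ω (x ^ p) = ω x + 1)
    -- `G` is complete:
    (hcomplete : ∀ c : ℕ → G,
      (∀ C : ℝ, ∃ t : ℕ, ∀ i ≥ t, ∀ j ≥ t, (C : WithTop ℝ) ≤ ω (c i * (c j)⁻¹)) →
      ∃ L : G, ∀ C : ℝ, ∃ t : ℕ, ∀ i ≥ t, (C : WithTop ℝ) ≤ ω (c i * L⁻¹)) :
    -- (a) the centre is isolated in `G`
    (∀ (g : G) (n : ℕ), 0 < n → g ^ n ∈ Subgroup.center G → g ∈ Subgroup.center G) ∧
    -- (b) for every open subgroup `U`, `Z(U) = Z(G) ∩ U`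
    (∀ U : Subgroup G,
      (∃ ν : ℝ, ∀ g : G, ((ν : ℝ) : WithTop ℝ) ≤ ω g → g ∈ U) →
      ∀ u ∈ U, (∀ x ∈ U, u * x = x * u) ↔ u ∈ Subgroup.center G) :=
  centre_isolated_and_centre_of_open_subgroup_general p hp G ω hquot hcomm htop hgt hpow
end
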